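/- arXiv:1612.01755 — 4 statements merged into one kernel-verified Lean document; each statement's English description precedes it below -/
import Mathlib

section
/- Let ε > 0 and K ≥ 1. Then there exists n ∈ ℕ with the following property: whenever (α_k)_{k=0}^∞ is a sequence of real numbers such that 0 ≤ α_k ≤ K^k for all k, α_n ≥ 1/2, and limsup_{k→∞} α_k^{1/k} ≤ 1, there exist m ∈ ℕ and nonnegative real numbers β_k (k = 0, 1, 2, ...) such that: β_0 ≤ ε; |β_{k+1} − β_k| ≤ 2ε for all k; β_k < β_{k+1} for all k = 0, 1, ..., m−1; β_k > β_{k+1} for all k ≥ m; α_m β_m = 1; α_k β_k ≤ 1 for all k; and lim_{k→∞} α_k β_{k+1} = 0. -/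
open Filter Topology

set_option maxHeartbeats 4000000

private lemma ev_pow_bound (α : ℕ → ℝ) (K : ℝ) (hK : 1 ≤ K) (hα0 : ∀ k, 0 ≤ α k)
    (hαK : ∀ k : ℕ, α k ≤ K ^ k)
    (hlim : Filter.limsup (fun k : ℕ => (α k) ^ ((1 : ℝ) / k)) Filter.atTop ≤ 1)
    {c : ℝ} (hc : 1 < c) : ∀ᶠ k in atTop, α k ≤ c ^ k := by
  have hK0 : (0:ℝ) ≤ K := le_trans zero_le_one hK
  have hub : ∀ k : ℕ, (α k) ^ ((1 : ℝ) / k) ≤ K := by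
    intro k
    cases k with
    | zero => simp [hK]
    | succ j =>
        have hk0 : ((j+1 : ℕ) : ℝ) ≠ 0 := by positivity
        have h1 : (α (j+1)) ^ ((1 : ℝ) / (j+1 : ℕ)) ≤ (K ^ (j+1 : ℕ)) ^ ((1 : ℝ) / (j+1 : ℕ)) :=
          Real.rpow_le_rpow (hα0 _) (hαK _) (by positivity)
        refine h1.trans (le_of_eq ?_)
        rw [← Real.rpow_natCast K (j+1), ← Real.rpow_mul hK0]
        rw [mul_one_div, div_self hk0, Real.rpow_one]
  have hev : ∀ᶠ k in (atTop : Filter ℕ), (α k) ^ ((1 : ℝ) / k) < c :=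
    eventually_lt_of_limsup_lt (lt_of_le_of_lt hlim hc) (isBoundedUnder_of ⟨K, hub⟩)
  filter_upwards [hev, eventually_ge_atTop 1] with k h1 h2
  have hk0 : (k : ℝ) ≠ 0 := by exact_mod_cast Nat.one_le_iff_ne_zero.mp h2
  have h3 : ((α k) ^ ((1 : ℝ) / k)) ^ (k : ℕ) ≤ c ^ (k : ℕ) :=
    pow_le_pow_left₀ (Real.rpow_nonneg (hα0 k) _) h1.le k
  calc α k = ((α k) ^ ((1 : ℝ) / k)) ^ (k : ℕ) := by
            rw [← Real.rpow_natCast ((α k) ^ ((1 : ℝ) / k)) k, ← Real.rpow_mul (hα0 k)]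
            rw [one_div, inv_mul_cancel₀ hk0, Real.rpow_one]
    _ ≤ c ^ (k : ℕ) := h3

private lemma exists_argmax (α : ℕ → ℝ) (hα0 : ∀ k, 0 ≤ α k) (t c : ℝ)
    (ht0 : 0 < t) (ht1 : t < 1) (hct0 : 0 ≤ c * t) (hct1 : c * t < 1)
    (hev : ∀ᶠ k in (atTop : Filter ℕ), α k ≤ c ^ k) :
    ∀ j : ℕ, 0 < α j → ∃ m, j ≤ m ∧ 0 < α m ∧ ∀ i, j ≤ i → α i * t ^ i ≤ α m * t ^ m := by
  intro j hαj
  have hc0 : 0 ≤ c := by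
    rcases le_or_gt 0 c with h | h
    · exact h
    · exfalso; nlinarith
  have hpos : 0 < α j * t ^ j := by positivity
  have htend : Tendsto (fun k : ℕ => (c*t) ^ k) atTop (nhds 0) :=
    tendsto_pow_atTop_nhds_zero_of_lt_one hct0 hct1
  have hev2 : ∀ᶠ k in (atTop : Filter ℕ), (c*t) ^ k < α j * t ^ j :=
    htend.eventually (eventually_lt_nhds hpos)
  have hev3 : ∀ᶠ k in (atTop : Filter ℕ), α k * t ^ k < α j * t ^ j := by
    filter_upwards [hev, hev2] with k h1 h2
    calc α k * t ^ k ≤ c ^ k * t ^ k := by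
          have := pow_pos ht0 k
          nlinarith
      _ = (c*t) ^ k := by rw [mul_pow]
      _ < α j * t ^ j := h2
  obtain ⟨N, hN⟩ := eventually_atTop.mp hev3
  obtain ⟨m, hm_mem, hm_max⟩ :=
    Finset.exists_max_image (Finset.Icc j (max N j)) (fun k => α k * t ^ k)
      ⟨j, Finset.mem_Icc.mpr ⟨le_refl j, le_max_right N j⟩⟩
  obtain ⟨hjm, hmN⟩ := Finset.mem_Icc.mp hm_mem
  have hmax : ∀ i, j ≤ i → α i * t ^ i ≤ α m * t ^ m := by
    intro i hji
    by_cases hi : i ≤ max N j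
    · exact hm_max i (Finset.mem_Icc.mpr ⟨hji, hi⟩)
    · push_neg at hi
      have hiN : N ≤ i := le_trans (le_max_left N j) hi.le
      have h1 : α i * t ^ i < α j * t ^ j := hN i hiN
      have h2 : α j * t ^ j ≤ α m * t ^ m :=
        hm_max j (Finset.mem_Icc.mpr ⟨le_refl j, le_max_right N j⟩)
      linarith
  have hαm : 0 < α m := by
    have h2 : α j * t ^ j ≤ α m * t ^ m := hmax j (le_refl j)
    have h3 : 0 < α m * t ^ m := lt_of_lt_of_le hpos h2
    rcases (hα0 m).lt_or_eq with h | h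
    · exact h
    · exfalso; rw [← h] at h3; simp at h3
  exact ⟨m, hjm, hαm, hmax⟩

private lemma lemA (α : ℕ → ℝ) (hα0 : ∀ k, 0 ≤ α k) (t ε' : ℝ)
    (ht0 : 0 < t) (ht1 : t < 1) (hε' : 0 < ε')
    (hrec : ∀ j : ℕ, 0 < α j → ∃ m, j ≤ m ∧ 0 < α m ∧ ∀ i, j ≤ i → α i * t ^ i ≤ α m * t ^ m) :
    ∀ d : ℕ, ∀ m : ℕ, 0 < α m →
      (∀ i, m < i → α i * t ^ i ≤ α m * t ^ m) →
      1 / α m ≤ ε' * (1 + m) →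
      1 / α m ≤ 2 * ε' * (d + 1) →
      ∃ m' : ℕ, 0 < α m' ∧ (∀ i, m' < i → α i * t ^ i ≤ α m' * t ^ m') ∧
        1 / α m' ≤ ε' * (1 + m') ∧ 1 / α m' ≤ 1 / α m ∧
        ∀ j, j < m' → 0 < α j → 1 / α m' ≤ 1 / α j + 2 * ε' * ((m' : ℝ) - j) := by
  intro d
  induction d with
  | zero =>
      intro m hm hR hLε hDd
      by_cases hLD : ∀ j, j < m → 0 < α j → 1 / α m ≤ 1 / α j + 2 * ε' * ((m : ℝ) - j)
      · exact ⟨m, hm, hR, hLε, le_refl _, hLD⟩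
      · exfalso
        push_neg at hLD
        obtain ⟨j, hjm, hαj, hblock⟩ := hLD
        have h1 : (0:ℝ) < 1 / α j := by positivity
        have h2 : (1:ℝ) ≤ (m:ℝ) - j := by
          have : (j:ℝ) + 1 ≤ m := by exact_mod_cast hjm
          linarith
        nlinarith
  | succ d ih =>
      intro m hm hR hLε hDd
      by_cases hLD : ∀ j, j < m → 0 < α j → 1 / α m ≤ 1 / α j + 2 * ε' * ((m : ℝ) - j)
      · exact ⟨m, hm, hR, hLε, le_refl _, hLD⟩
      · push_neg at hLD
        obtain ⟨j, hjm, hαj, hblock⟩ := hLD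
        have hjm' : (j:ℝ) + 1 ≤ m := by exact_mod_cast hjm
        obtain ⟨m'', hjm'', hαm'', hmax⟩ := hrec j hαj
        have hjm''R : (j:ℝ) ≤ m'' := by exact_mod_cast hjm''
        have hA : α j * t ^ j ≤ α m'' * t ^ m'' := hmax j (le_refl j)
        have hpowle : t ^ m'' ≤ t ^ j := pow_le_pow_of_le_one ht0.le ht1.le hjm''
        have hαle : α j ≤ α m'' := by
          have h4 : α j * t ^ m'' ≤ α j * t ^ j :=
            mul_le_mul_of_nonneg_left hpowle (hα0 j)
          have h5 : α j * t ^ m'' ≤ α m'' * t ^ m'' := le_trans h4 hA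
          have h6 : (0:ℝ) < t ^ m'' := pow_pos ht0 m''
          exact le_of_mul_le_mul_right h5 h6
        have hDj : 1 / α m'' ≤ 1 / α j := one_div_le_one_div_of_le hαj hαle
        have hji : 1 / α j < 1 / α m := by nlinarith [hε', hjm']
        have hαmj : α m < α j := lt_of_one_div_lt_one_div hαj hji
        have hAjm : α m * t ^ m < α j * t ^ j := by
          have h7 : t ^ m ≤ t ^ j := pow_le_pow_of_le_one ht0.le ht1.le (le_of_lt hjm)
          have h8 : (0:ℝ) < t ^ j := pow_pos ht0 j
          nlinarith
        have hm''m : m'' < m := by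
          by_contra h
          push_neg at h
          have h9 : α m'' * t ^ m'' ≤ α m * t ^ m := by
            rcases eq_or_lt_of_le h with h' | h'
            · subst h'; exact le_refl _
            · exact hR m'' h'
          linarith
        have hm''mR : (m'':ℝ) ≤ m := le_of_lt (by exact_mod_cast hm''m)
        have hR'' : ∀ i, m'' < i → α i * t ^ i ≤ α m'' * t ^ m'' := by
          intro i hi
          exact hmax i (le_trans hjm'' (le_of_lt hi))
        have hkey : 1 / α m'' < 1 / α m - 2 * ε' * ((m:ℝ) - j) := by
          linarith
        have hLε'' : 1 / α m'' ≤ ε' * (1 + m'') := by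
          have : (m:ℝ) - j ≥ (m:ℝ) - m'' := by linarith
          nlinarith [hε']
        have hDd'' : 1 / α m'' ≤ 2 * ε' * (d + 1) := by
          push_cast at hDd ⊢
          nlinarith [hε']
        obtain ⟨m', h1, h2, h3, h4, h5⟩ := ih m'' hαm'' hR'' hLε'' hDd''
        exact ⟨m', h1, h2, h3, le_trans h4 (le_trans hDj (le_of_lt hji)), h5⟩

/-- The key technical lemma. For every `ε > 0` and `K ≥ 1` there is `n ∈ ℕ` such that:
whenever `(α_k)` is a sequence of reals with `0 ≤ α_k ≤ K^k` for all `k`, `α_n ≥ 1/2`,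
and `limsup_k α_k^{1/k} ≤ 1`, there exist `m ∈ ℕ` and nonnegative reals `β_k` with
`β_0 ≤ ε`, `|β_{k+1} − β_k| ≤ 2ε`, `β_k < β_{k+1}` for `k < m`, `β_k > β_{k+1}` for
`k ≥ m`, `α_m β_m = 1`, `α_k β_k ≤ 1` for all `k`, and `α_k β_{k+1} → 0`. -/
theorem exists_nat_forall_exists_beta (ε K : ℝ) (hε : 0 < ε) (hK : 1 ≤ K) :
    ∃ n : ℕ, ∀ α : ℕ → ℝ,
      (∀ k : ℕ, 0 ≤ α k) → (∀ k : ℕ, α k ≤ K ^ k) → 1 / 2 ≤ α n →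
      Filter.limsup (fun k : ℕ => (α k) ^ ((1 : ℝ) / k)) Filter.atTop ≤ 1 →
      ∃ m : ℕ, ∃ β : ℕ → ℝ,
        (∀ k : ℕ, 0 ≤ β k) ∧
        β 0 ≤ ε ∧
        (∀ k : ℕ, |β (k + 1) - β k| ≤ 2 * ε) ∧
        (∀ k < m, β k < β (k + 1)) ∧
        (∀ k ≥ m, β (k + 1) < β k) ∧
        α m * β m = 1 ∧
        (∀ k : ℕ, α k * β k ≤ 1) ∧
        Filter.Tendsto (fun k : ℕ => α k * β (k + 1)) Filter.atTop (nhds 0) := by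
  obtain ⟨ε', hε'pos, hε'ε⟩ : ∃ x : ℝ, 0 < x ∧ x ≤ ε := by
    refine ⟨min ε 1 / 2, by positivity, ?_⟩
    have h1 : min ε 1 ≤ ε := min_le_left _ _
    have h2 : 0 < min ε 1 := lt_min hε one_pos
    linarith
  obtain ⟨n, hn2, hn_inv, hn_ε'⟩ :
      ∃ n : ℕ, (2:ℝ) ≤ (n:ℝ) ∧ ((n:ℝ))⁻¹ ≤ ε ∧ 2 ≤ ε' * (1 + (n:ℝ)) := by
    refine ⟨⌈2 / ε'⌉₊ + ⌈1 / ε⌉₊ + 2, ?_, ?_, ?_⟩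
    · have : (2:ℕ) ≤ ⌈2 / ε'⌉₊ + ⌈1 / ε⌉₊ + 2 := by omega
      exact_mod_cast this
    · have h1 : 1 / ε ≤ (⌈1 / ε⌉₊ : ℝ) := Nat.le_ceil _
      have h2 : ((⌈1 / ε⌉₊ : ℕ) : ℝ) ≤ ((⌈2 / ε'⌉₊ + ⌈1 / ε⌉₊ + 2 : ℕ) : ℝ) := by
        have : ⌈1 / ε⌉₊ ≤ ⌈2 / ε'⌉₊ + ⌈1 / ε⌉₊ + 2 := by omega
        exact_mod_cast this
      have h3 : 1 / ε ≤ ((⌈2 / ε'⌉₊ + ⌈1 / ε⌉₊ + 2 : ℕ) : ℝ) := le_trans h1 h2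
      rw [inv_eq_one_div]
      calc 1 / ((⌈2 / ε'⌉₊ + ⌈1 / ε⌉₊ + 2 : ℕ) : ℝ) ≤ 1 / (1 / ε) :=
            one_div_le_one_div_of_le (by positivity) h3
        _ = ε := one_div_one_div ε
    · have h1 : 2 / ε' ≤ (⌈2 / ε'⌉₊ : ℝ) := Nat.le_ceil _
      have h2 : ((⌈2 / ε'⌉₊ : ℕ) : ℝ) ≤ ((⌈2 / ε'⌉₊ + ⌈1 / ε⌉₊ + 2 : ℕ) : ℝ) := by
        have : ⌈2 / ε'⌉₊ ≤ ⌈2 / ε'⌉₊ + ⌈1 / ε⌉₊ + 2 := by omega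
        exact_mod_cast this
      have h3 : 2 / ε' ≤ ((⌈2 / ε'⌉₊ + ⌈1 / ε⌉₊ + 2 : ℕ) : ℝ) := le_trans h1 h2
      have h4 : 2 ≤ ((⌈2 / ε'⌉₊ + ⌈1 / ε⌉₊ + 2 : ℕ) : ℝ) * ε' := (div_le_iff₀ hε'pos).mp h3
      nlinarith
  refine ⟨n, ?_⟩
  intro α hα0 hαK hαn hlim
  have hnpos : (0:ℝ) < (n:ℝ) := by linarith
  obtain ⟨t, ht0, ht1, h1mt⟩ : ∃ t : ℝ, 0 < t ∧ t < 1 ∧ 1 - t = ((n:ℝ))⁻¹ := by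
    refine ⟨1 - ((n:ℝ))⁻¹, ?_, ?_, by ring⟩
    · have h1 : ((n:ℝ))⁻¹ ≤ 1/2 := by
        rw [inv_eq_one_div]
        exact one_div_le_one_div_of_le (by norm_num) hn2
      linarith
    · have : 0 < ((n:ℝ))⁻¹ := by positivity
      linarith
  have hinv_pos : 0 < ((n:ℝ))⁻¹ := by positivity
  have hinv_ε : ((n:ℝ))⁻¹ ≤ ε := hn_inv
  obtain ⟨c, hc1, hct0, hct1, hev⟩ :
      ∃ c : ℝ, 1 < c ∧ 0 ≤ c * t ∧ c * t < 1 ∧ ∀ᶠ k in (atTop : Filter ℕ), α k ≤ c ^ k := by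
    refine ⟨(1 + t⁻¹)/2, ?_, ?_, ?_, ?_⟩
    · have ht' : t * t⁻¹ = 1 := mul_inv_cancel₀ ht0.ne'
      nlinarith
    · have : 0 < t⁻¹ := by positivity
      nlinarith
    · have hct : (1 + t⁻¹)/2 * t = (t + 1)/2 := by field_simp
      rw [hct]; linarith
    · refine ev_pow_bound α K hK hα0 hαK hlim ?_
      have ht' : t * t⁻¹ = 1 := mul_inv_cancel₀ ht0.ne'
      nlinarith
  have hrec := exists_argmax α hα0 t c ht0 ht1 hct0 hct1 hev
  have hαn' : 0 < α n := by linarith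
  obtain ⟨m₀, hnm₀, hαm₀, hmax₀⟩ := hrec n hαn'
  have hαm₀half : 1/2 ≤ α m₀ := by
    have hA : α n * t ^ n ≤ α m₀ * t ^ m₀ := hmax₀ n (le_refl n)
    have hpowle : t ^ m₀ ≤ t ^ n := pow_le_pow_of_le_one ht0.le ht1.le hnm₀
    have h4 : α n * t ^ m₀ ≤ α n * t ^ n := mul_le_mul_of_nonneg_left hpowle (hα0 n)
    have h5 : α n * t ^ m₀ ≤ α m₀ * t ^ m₀ := le_trans h4 hA
    have h6 : (0:ℝ) < t ^ m₀ := pow_pos ht0 m₀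
    have := le_of_mul_le_mul_right h5 h6
    linarith
  have hD₀ : 1 / α m₀ ≤ 2 := by
    rw [div_le_iff₀ hαm₀]; linarith
  have hLε₀ : 1 / α m₀ ≤ ε' * (1 + (m₀:ℝ)) := by
    have h1 : (n:ℝ) ≤ (m₀:ℝ) := by exact_mod_cast hnm₀
    have h2 : ε' * (1 + (n:ℝ)) ≤ ε' * (1 + (m₀:ℝ)) := by nlinarith
    linarith
  have hR₀ : ∀ i, m₀ < i → α i * t ^ i ≤ α m₀ * t ^ m₀ := fun i hi =>
    hmax₀ i (le_trans hnm₀ (le_of_lt hi))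
  have hDd₀ : 1 / α m₀ ≤ 2 * ε' * ((⌈1/ε'⌉₊ : ℝ) + 1) := by
    have h1 : 1 / ε' ≤ (⌈1/ε'⌉₊ : ℝ) := Nat.le_ceil _
    have h2 : 1 ≤ ε' * ((⌈1/ε'⌉₊ : ℝ) + 1) := by
      have h3 : ε' * (1/ε') = 1 := by field_simp
      nlinarith
    nlinarith
  obtain ⟨m, hαm, hR, hLε, hDm₀, hLD⟩ :=
    lemA α hα0 t ε' ht0 ht1 hε'pos hrec ⌈1/ε'⌉₊ m₀ hαm₀ hR₀ hLε₀ hDd₀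
  -- the construction
  obtain ⟨D, hD_def⟩ : ∃ x : ℝ, x = 1 / α m := ⟨_, rfl⟩
  have hD0 : 0 < D := by rw [hD_def]; positivity
  have hD2 : D ≤ 2 := by rw [hD_def]; exact le_trans hDm₀ hD₀
  have hDLε : D ≤ ε' * (1 + (m:ℝ)) := by rw [hD_def]; exact hLε
  have hDLD : ∀ j : ℕ, j < m → 0 < α j → D ≤ 1 / α j + 2 * ε' * ((m : ℝ) - (j : ℝ)) := by
    intro j h1 h2; rw [hD_def]; exact hLD j h1 h2
  obtain ⟨E, hE_def⟩ : ∃ F : ℕ → ℝ,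
      F = fun j : ℕ => min (ε' * (1 + (j:ℝ))) (min D (if α j = 0 then D else 1 / α j)) := ⟨_, rfl⟩
  obtain ⟨g, hg_def⟩ : ∃ G : ℕ → ℕ → ℝ,
      G = fun (j k : ℕ) => if k ≤ j then E j * t ^ (j - k) else E j + 2 * ε' * ((k:ℝ) - (j:ℝ)) :=
    ⟨_, rfl⟩
  have hS : (Finset.range (m+1)).Nonempty := ⟨0, Finset.mem_range.mpr (Nat.succ_pos m)⟩
  obtain ⟨β, hβ_def⟩ : ∃ B : ℕ → ℝ,
      B = fun k : ℕ => if k ≤ m then (Finset.range (m+1)).inf' hS (fun j => g j k)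
        else D * t ^ (k - m) := ⟨_, rfl⟩
  have hE_pos : ∀ j, 0 < E j := by
    intro j
    simp only [hE_def]
    refine lt_min (by positivity) (lt_min hD0 ?_)
    split_ifs with h
    · exact hD0
    · have : 0 < α j := (hα0 j).lt_of_ne (Ne.symm h)
      positivity
  have hE_leD : ∀ j, E j ≤ D := by
    intro j; simp only [hE_def]
    exact le_trans (min_le_right _ _) (min_le_left _ _)
  have hE_le2 : ∀ j, E j ≤ 2 := fun j => le_trans (hE_leD j) hD2
  have hE_line : ∀ j, E j ≤ ε' * (1 + (j:ℝ)) := by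
    intro j; simp only [hE_def]; exact min_le_left _ _
  have hE_inv : ∀ j, α j ≠ 0 → E j ≤ 1 / α j := by
    intro j h; simp only [hE_def]
    refine le_trans (min_le_right _ _) (le_trans (min_le_right _ _) ?_)
    rw [if_neg h]
  have hEm : E m = D := by
    simp only [hE_def]
    rw [if_neg hαm.ne', ← hD_def, min_self]
    exact min_eq_right hDLε
  have hg_pos : ∀ j k, 0 < g j k := by
    intro j k
    simp only [hg_def]
    split_ifs with h
    · have := hE_pos j; positivity
    · push_neg at h
      have h2 : (j:ℝ) < (k:ℝ) := by exact_mod_cast h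
      have := hE_pos j
      nlinarith
  have hg_mono : ∀ j k, g j k < g j (k+1) := by
    intro j k
    simp only [hg_def]
    by_cases h1 : k + 1 ≤ j
    · have h2 : k ≤ j := le_trans (Nat.le_succ k) h1
      rw [if_pos h2, if_pos h1]
      have h3 : j - k = (j - (k+1)) + 1 := by omega
      rw [h3, pow_succ]
      have h4 := hE_pos j
      have h5 : (0:ℝ) < t ^ (j - (k+1)) := pow_pos ht0 _
      nlinarith [mul_pos h4 h5]
    · by_cases h2 : k ≤ j
      · have h3 : j = k := by omega
        subst h3
        rw [if_pos (le_refl j), if_neg h1]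
        have h4 : j - j = 0 := by omega
        rw [h4, pow_zero, mul_one]
        have h5 : ((j+1:ℕ):ℝ) - (j:ℝ) = 1 := by push_cast; ring
        rw [h5]
        nlinarith [hε'pos]
      · rw [if_neg h2, if_neg h1]
        have h3 : ((k:ℝ)) < ((k+1:ℕ):ℝ) := by push_cast; linarith
        nlinarith [hε'pos]
  have hg_diff : ∀ j k, g j (k+1) - g j k ≤ 2 * ε := by
    intro j k
    simp only [hg_def]
    by_cases h1 : k + 1 ≤ j
    · have h2 : k ≤ j := le_trans (Nat.le_succ k) h1
      rw [if_pos h2, if_pos h1]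
      have h3 : j - k = (j - (k+1)) + 1 := by omega
      rw [h3, pow_succ]
      have h4 := hE_pos j
      have h5 : t ^ (j - (k+1)) ≤ 1 := pow_le_one₀ ht0.le ht1.le
      have h6 : (0:ℝ) < t ^ (j - (k+1)) := pow_pos ht0 _
      have h9a : E j * t ^ (j - (k+1)) ≤ 2 := by nlinarith [hE_le2 j]
      have h9 : E j * t ^ (j - (k+1)) * ((n:ℝ))⁻¹ ≤ 2 * ((n:ℝ))⁻¹ :=
        mul_le_mul_of_nonneg_right h9a hinv_pos.le
      have h7 : E j * t ^ (j-(k+1)) - E j * (t ^ (j-(k+1)) * t)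
          = E j * t ^ (j-(k+1)) * (1 - t) := by ring
      have h7b : E j * t ^ (j-(k+1)) * (1 - t) = E j * t ^ (j-(k+1)) * ((n:ℝ))⁻¹ := by
        rw [h1mt]
      have h10 : 2 * ((n:ℝ))⁻¹ ≤ 2 * ε := by linarith
      linarith
    · by_cases h2 : k ≤ j
      · have h3 : j = k := by omega
        subst h3
        rw [if_pos (le_refl j), if_neg h1]
        have h4 : j - j = 0 := by omega
        rw [h4, pow_zero, mul_one]
        have h5 : ((j+1:ℕ):ℝ) - (j:ℝ) = 1 := by push_cast; ring
        rw [h5]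
        linarith [hε'pos, hε'ε]
      · rw [if_neg h2, if_neg h1]
        have h3 : ((k+1:ℕ):ℝ) = (k:ℝ) + 1 := by push_cast; ring
        rw [h3]
        have h4 : E j + 2*ε'*((k:ℝ)+1-(j:ℝ)) - (E j + 2*ε'*((k:ℝ)-(j:ℝ))) = 2*ε' := by ring
        rw [h4]
        linarith
  have hβ_le_g : ∀ k, k ≤ m → ∀ j, j ≤ m → β k ≤ g j k := by
    intro k hk j hj
    simp only [hβ_def]
    rw [if_pos hk]
    exact Finset.inf'_le _ (Finset.mem_range.mpr (Nat.lt_succ_of_le hj))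
  have hgkk : ∀ k, g k k = E k := by
    intro k
    simp only [hg_def]
    rw [if_pos (le_refl k), Nat.sub_self, pow_zero, mul_one]
  have hβm : β m = D := by
    apply le_antisymm
    · have h1 := hβ_le_g m (le_refl m) m (le_refl m)
      rw [hgkk m, hEm] at h1
      exact h1
    · simp only [hβ_def]
      rw [if_pos (le_refl m)]
      apply Finset.le_inf'
      intro j hj
      have hjm : j ≤ m := Nat.lt_succ_iff.mp (Finset.mem_range.mp hj)
      rcases eq_or_lt_of_le hjm with rfl | hjm'
      · rw [hgkk j, hEm]
      · have hjmR : (j:ℝ) + 1 ≤ (m:ℝ) := by exact_mod_cast hjm'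
        have hg_eq : g j m = E j + 2 * ε' * ((m:ℝ) - (j:ℝ)) := by
          simp only [hg_def]
          rw [if_neg (by omega : ¬ m ≤ j)]
        rw [hg_eq]
        have hZ : 0 ≤ 2 * ε' * ((m:ℝ) - (j:ℝ)) := by nlinarith [hε'pos]
        have hkey : D - 2 * ε' * ((m:ℝ) - (j:ℝ)) ≤ E j := by
          simp only [hE_def]
          refine le_min ?_ (le_min (by linarith) ?_)
          · nlinarith [hε'pos]
          · split_ifs with h
            · linarith
            · have hαj : 0 < α j := (hα0 j).lt_of_ne (Ne.symm h)
              have := hDLD j hjm' hαj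
              linarith
        linarith
  have hβ_geom : ∀ k, m ≤ k → β k = D * t ^ (k - m) := by
    intro k hk
    rcases eq_or_lt_of_le hk with rfl | h
    · rw [Nat.sub_self, pow_zero, mul_one, hβm]
    · simp only [hβ_def]
      rw [if_neg (by omega : ¬ k ≤ m)]
  have hβ_nonneg : ∀ k, 0 ≤ β k := by
    intro k
    by_cases hk : k ≤ m
    · simp only [hβ_def]
      rw [if_pos hk]
      exact le_of_lt ((Finset.lt_inf'_iff hS).mpr (fun j _ => hg_pos j k))
    · simp only [hβ_def]
      rw [if_neg hk]
      positivity
  have hinc : ∀ k, k + 1 ≤ m → β k < β (k+1) := by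
    intro k hk
    have hk' : k ≤ m := le_trans (Nat.le_succ k) hk
    obtain ⟨j₁, hj₁mem, hj₁eq⟩ := Finset.exists_mem_eq_inf' hS (fun j => g j (k+1))
    have hj₁m : j₁ ≤ m := Nat.lt_succ_iff.mp (Finset.mem_range.mp hj₁mem)
    have h1 : β (k+1) = g j₁ (k+1) := by
      simp only [hβ_def]
      rw [if_pos hk]
      exact hj₁eq
    have h2 : β k ≤ g j₁ k := hβ_le_g k hk' j₁ hj₁m
    have h3 := hg_mono j₁ k
    linarith
  refine ⟨m, β, hβ_nonneg, ?_, ?_, ?_, ?_, ?_, ?_, ?_⟩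
  · -- β 0 ≤ ε
    have h1 := hβ_le_g 0 (Nat.zero_le m) 0 (Nat.zero_le m)
    rw [hgkk 0] at h1
    have h2 := hE_line 0
    simp only [Nat.cast_zero] at h2
    linarith
  · -- increments
    intro k
    by_cases hk : k + 1 ≤ m
    · have hk' : k ≤ m := le_trans (Nat.le_succ k) hk
      obtain ⟨j₀, hj₀mem, hj₀eq⟩ := Finset.exists_mem_eq_inf' hS (fun j => g j k)
      have hj₀m : j₀ ≤ m := Nat.lt_succ_iff.mp (Finset.mem_range.mp hj₀mem)
      have hβk : β k = g j₀ k := by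
        simp only [hβ_def]
        rw [if_pos hk']
        exact hj₀eq
      have h1 : β (k+1) ≤ g j₀ (k+1) := hβ_le_g (k+1) hk j₀ hj₀m
      have h2 := hg_diff j₀ k
      have h3 := hinc k hk
      rw [abs_le]
      constructor
      · linarith
      · rw [hβk]; linarith
    · push_neg at hk
      have hmk : m ≤ k := by omega
      have h1 : β k = D * t ^ (k - m) := hβ_geom k hmk
      have h2 : β (k+1) = D * t ^ (k + 1 - m) := hβ_geom (k+1) (le_trans hmk (Nat.le_succ k))
      have h3 : k + 1 - m = (k - m) + 1 := by omega
      rw [h2, h3, pow_succ, h1]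
      have h4 : (0:ℝ) < t ^ (k - m) := pow_pos ht0 _
      have h5 : t ^ (k - m) ≤ 1 := pow_le_one₀ ht0.le ht1.le
      have h6 : D * (t ^ (k-m) * t) - D * t ^ (k-m) = - (D * t ^ (k-m) * (1 - t)) := by ring
      have hnn : 0 ≤ D * t ^ (k-m) * (1 - t) :=
        mul_nonneg (mul_nonneg hD0.le h4.le) (by linarith)
      rw [h6, abs_neg, abs_of_nonneg hnn]
      have h9a : D * t ^ (k-m) ≤ 2 := by
        calc D * t ^ (k-m) ≤ D * 1 := mul_le_mul_of_nonneg_left h5 hD0.le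
          _ = D := mul_one D
          _ ≤ 2 := hD2
      have h9 : D * t ^ (k-m) * ((n:ℝ))⁻¹ ≤ 2 * ((n:ℝ))⁻¹ :=
        mul_le_mul_of_nonneg_right h9a hinv_pos.le
      have h7b : D * t ^ (k-m) * (1 - t) = D * t ^ (k-m) * ((n:ℝ))⁻¹ := by rw [h1mt]
      have h10 : 2 * ((n:ℝ))⁻¹ ≤ 2 * ε := by linarith
      linarith
  · -- strict increase
    intro k hkm
    exact hinc k hkm
  · -- strict decrease
    intro k hk
    have h1 : β k = D * t ^ (k - m) := hβ_geom k hk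
    have h2 : β (k+1) = D * t ^ (k + 1 - m) := hβ_geom (k+1) (le_trans hk (Nat.le_succ k))
    have h3 : k + 1 - m = (k - m) + 1 := by omega
    rw [h1, h2, h3, pow_succ]
    have h4 : (0:ℝ) < t ^ (k - m) := pow_pos ht0 _
    nlinarith [mul_pos hD0 h4]
  · -- α m * β m = 1
    rw [hβm, hD_def]
    field_simp
  · -- ∀ k, α k * β k ≤ 1
    intro k
    by_cases hk : k ≤ m
    · have h1 : β k ≤ E k := by
        have := hβ_le_g k hk k hk
        rw [hgkk k] at this
        exact this
      by_cases hαk : α k = 0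
      · rw [hαk]; norm_num
      · have hαk' : 0 < α k := (hα0 k).lt_of_ne (Ne.symm hαk)
        have h2 : β k ≤ 1 / α k := le_trans h1 (hE_inv k hαk)
        calc α k * β k ≤ α k * (1 / α k) := mul_le_mul_of_nonneg_left h2 (hα0 k)
          _ = 1 := by field_simp
    · push_neg at hk
      have hmk : m ≤ k := le_of_lt hk
      have hrecord : α k * t ^ k ≤ α m * t ^ m := hR k hk
      have ht_sub : t ^ (k - m) = t ^ k * (t ^ m)⁻¹ := pow_sub₀ t ht0.ne' hmk
      have htm : (0:ℝ) < t ^ m := pow_pos ht0 m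
      have heq : α k * β k = (α k * t ^ k) * ((t ^ m)⁻¹ * D) := by
        rw [hβ_geom k hmk, ht_sub]; ring
      rw [heq]
      have h2 : (α k * t ^ k) * ((t ^ m)⁻¹ * D) ≤ (α m * t ^ m) * ((t ^ m)⁻¹ * D) := by
        apply mul_le_mul_of_nonneg_right hrecord
        positivity
      have h3 : (α m * t ^ m) * ((t ^ m)⁻¹ * D) = 1 := by
        rw [hD_def]
        field_simp
      exact h2.trans (le_of_eq h3)
  · -- tendsto
    apply squeeze_zero' (g := fun k => (D * t * (t ^ m)⁻¹) * (c*t) ^ k)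
    · exact Eventually.of_forall (fun k => mul_nonneg (hα0 k) (hβ_nonneg (k+1)))
    · filter_upwards [hev, eventually_ge_atTop m] with k h1 h2
      have h3 : β (k+1) = D * t ^ (k + 1 - m) := hβ_geom (k+1) (le_trans h2 (Nat.le_succ k))
      have h4 : k + 1 - m = (k - m) + 1 := by omega
      have ht_sub : t ^ (k - m) = t ^ k * (t ^ m)⁻¹ := pow_sub₀ t ht0.ne' h2
      have heq : α k * β (k+1) = (α k * t ^ k) * ((t ^ m)⁻¹ * t * D) := by
        rw [h3, h4, pow_succ, ht_sub]; ring
      rw [heq]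
      have htm : (0:ℝ) < t ^ m := pow_pos ht0 m
      have htk : (0:ℝ) ≤ t ^ k := (pow_pos ht0 k).le
      have h5 : α k * t ^ k ≤ c ^ k * t ^ k := mul_le_mul_of_nonneg_right h1 htk
      have h6 : (α k * t ^ k) * ((t ^ m)⁻¹ * t * D) ≤ (c ^ k * t ^ k) * ((t ^ m)⁻¹ * t * D) := by
        apply mul_le_mul_of_nonneg_right h5
        positivity
      have h7 : (c ^ k * t ^ k) * ((t ^ m)⁻¹ * t * D) = (D * t * (t ^ m)⁻¹) * (c*t) ^ k := by
        rw [mul_pow]; ring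
      linarith [h6, le_of_eq h7]
    · have h8 : Tendsto (fun k : ℕ => (c*t) ^ k) atTop (nhds 0) :=
        tendsto_pow_atTop_nhds_zero_of_lt_one hct0 hct1
      have h9 := h8.const_mul (D * t * (t ^ m)⁻¹)
      simpa using h9
end

section
/- Let X be a normed vector lattice, let C ⊆ X₊ be a non-zero max-cone, and let T : C → C be bounded, positively homogeneous, and finite-suprema preserving. If t is a real number with sup{r_x(T) : x ∈ C} ≤ t ≤ r(T), then t ∈ σ_ap(T). In particular, r(T) ∈ σ_ap(T). -/
/-!
If `t = 0` and `0 ∉ σ_ap(T)`, then `‖T y‖ ≥ ε ‖y‖` on `C` for some `ε > 0`, which forces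
`r_x(T) ≥ ε` for every unit vector `x ∈ C`.

For `t > 0` fix `1 < a < θ = 1 + γ`. Since `t ≤ r(T)` there is `x ∈ C` with
`‖T^N x‖ > (t a / θ)^N ‖x‖`, and since `r_x(T) ≤ t` eventually `‖T^m x‖ ≤ (t a)^m`. The approximate
eigenvector is `y = ⋁_{j ≤ M} w_j T^j x` with the tent weights `w_j = θ^{min(j, 2N - j)} / t^j`.
Because `T` preserves suprema, `T y ≤ θ t y ∨ w_M T^{M+1} x` and `t y ≤ t x ∨ θ T y`, so
`|T y - t y| ≤ γ t y + γ T y + t x + w_M T^{M+1} x`. The rising half of the tent makes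
`‖y‖ ≥ w_N ‖T^N x‖ ≥ a^N ‖x‖` large compared with `t ‖x‖`, and the falling half makes the tail term
`w_M ‖T^{M+1} x‖ ≤ t a θ^{2N} (a / θ)^M` negligible once `M` is large.
-/

open Filter Topology Bornology Pointwise

variable {X : Type*}

section ConeDefs

variable [NormedAddCommGroup X] [NormedSpace ℝ X]

/-- `C` is a cone (with vertex `0`): `tC ⊆ C` for all `t ≥ 0`. -/
def IsCone (C : Set X) : Prop :=
  ∀ t : ℝ, 0 ≤ t → ∀ x ∈ C, t • x ∈ C

/-- `T` is positively homogeneous (of degree 1) on `C`. -/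
def PosHomOn (C : Set X) (T : X → X) : Prop :=
  ∀ t : ℝ, 0 ≤ t → ∀ x ∈ C, T (t • x) = t • T x

/-- `T` is Lipschitz on `C`. -/
def LipschitzOnCone (C : Set X) (T : X → X) : Prop :=
  ∃ L : ℝ, 0 < L ∧ ∀ x ∈ C, ∀ y ∈ C, ‖T x - T y‖ ≤ L * ‖x - y‖

/-- `T` is bounded on `C`: the set of ratios `‖T x‖/‖x‖` (over nonzero `x ∈ C`)
is bounded above. -/
def BoundedOnCone (C : Set X) (T : X → X) : Prop :=
  BddAbove {r : ℝ | ∃ x ∈ C, x ≠ 0 ∧ r = ‖T x‖ / ‖x‖}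

/-- The norm `‖T‖ = sup {‖T x‖/‖x‖ : x ∈ C, x ≠ 0}` of `T` on the cone `C`. -/
noncomputable def coneNorm (C : Set X) (T : X → X) : ℝ :=
  sSup {r : ℝ | ∃ x ∈ C, x ≠ 0 ∧ r = ‖T x‖ / ‖x‖}

/-- The Bonsall cone spectral radius `r(T) = lim_n ‖Tⁿ‖^{1/n} = inf_n ‖Tⁿ‖^{1/n}`
of `T` on the cone `C` (the limit exists and equals the infimum by submultiplicativity). -/
noncomputable def coneRadius (C : Set X) (T : X → X) : ℝ :=
  ⨅ n : ℕ, (coneNorm C (T^[n + 1])) ^ ((1 : ℝ) / (n + 1))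

/-- The local cone spectral radius `r_x(T) = limsup_n ‖Tⁿ x‖^{1/n}`. -/
noncomputable def localRadius (C : Set X) (T : X → X) (x : X) : ℝ :=
  Filter.limsup (fun n : ℕ => ‖T^[n] x‖ ^ ((1 : ℝ) / n)) Filter.atTop

/-- The approximate point spectrum of `T` on the cone `C`: all `s ≥ 0` with
`inf {‖T x - s x‖ : x ∈ C, ‖x‖ = 1} = 0`. -/
def apSpectrum (C : Set X) (T : X → X) : Set ℝ :=
  {s : ℝ | 0 ≤ s ∧ ∀ ε : ℝ, 0 < ε → ∃ x ∈ C, ‖x‖ = 1 ∧ ‖T x - s • x‖ < ε}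

end ConeDefs

section LatticeDefs

variable [Lattice X]

/-- A max-cone: a cone contained in the positive cone such that the supremum of any
two of its elements belongs to it (given here together with `C ⊆ X₊` separately). -/
def MaxCone [NormedAddCommGroup X] [NormedSpace ℝ X] (C : Set X) : Prop :=
  IsCone C ∧ (∀ x ∈ C, 0 ≤ x) ∧ ∀ x ∈ C, ∀ y ∈ C, x ⊔ y ∈ C

/-- `T` preserves finite suprema on `C`. -/
def PreservesSupOn (C : Set X) (T : X → X) : Prop :=
  ∀ x ∈ C, ∀ y ∈ C, T (x ⊔ y) = T x ⊔ T y

end LatticeDefs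

lemma inv_two_pow_smul_nonneg [AddCommGroup X] [Lattice X] [IsOrderedAddMonoid X] [Module ℝ X]
    {v : X} (hv : 0 ≤ v) (k : ℕ) : 0 ≤ ((2 : ℝ) ^ k)⁻¹ • v := by
  induction k with
  | zero => simpa using hv
  | succ k ih =>
    apply nsmul_two_semiclosed
    rwa [← Nat.cast_smul_eq_nsmul ℝ, smul_smul, pow_succ, mul_inv, Nat.cast_ofNat,
      mul_left_comm, mul_inv_cancel₀ two_ne_zero, mul_one]

lemma norm_sub_le_of_sub_le [NormedAddCommGroup X] [Lattice X] [HasSolidNorm X]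
    [IsOrderedAddMonoid X] {a b p q : X} (h₁ : a - b ≤ p) (h₂ : b - a ≤ q) (hp : 0 ≤ p)
    (hq : 0 ≤ q) : ‖a - b‖ ≤ ‖p‖ + ‖q‖ := by
  refine (norm_le_norm_of_abs_le_abs ?_).trans (norm_add_le p q)
  rw [abs_of_nonneg (add_nonneg hp hq), abs_le', neg_sub]
  exact ⟨h₁.trans (le_add_of_nonneg_right hq), h₂.trans (le_add_of_nonneg_left hp)⟩

section OrderedModule

variable [NormedAddCommGroup X] [Lattice X] [HasSolidNorm X] [IsOrderedAddMonoid X]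
  [NormedSpace ℝ X]

/-- Compatibility of real scalars with the order is not among the hypotheses on `X`; it holds
because the positive cone is closed and contains all dyadic multiples of `v`. -/
lemma HasSolidNorm.smul_nonneg {c : ℝ} (hc : 0 ≤ c) {v : X} (hv : 0 ≤ v) : 0 ≤ c • v := by
  have hdyadic : Tendsto (fun k : ℕ ↦ (⌊c * 2 ^ k⌋₊ : ℝ) / 2 ^ k) atTop (𝓝 c) :=
    (tendsto_nat_floor_mul_div_atTop hc).comp (tendsto_pow_atTop_atTop_of_one_lt one_lt_two)
  refine isClosed_nonneg.mem_of_tendsto (hdyadic.smul_const v) (Eventually.of_forall fun k ↦ ?_)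
  simp only [div_eq_mul_inv, ← smul_smul, Nat.cast_smul_eq_nsmul]
  exact nsmul_nonneg (inv_two_pow_smul_nonneg hv k) _

instance HasSolidNorm.isOrderedModule : IsOrderedModule ℝ X :=
  .of_smul_nonneg fun _ hc _ hv ↦ HasSolidNorm.smul_nonneg hc hv

end OrderedModule

lemma rpow_one_div_le_iff_le_pow {a b : ℝ} {n : ℕ} (ha : 0 ≤ a) (hb : 0 ≤ b) (hn : n ≠ 0) :
    a ^ (1 / (n : ℝ)) ≤ b ↔ a ≤ b ^ n := by
  rw [one_div, Real.rpow_inv_le_iff_of_pos ha hb (by positivity), Real.rpow_natCast]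

lemma le_rpow_one_div_iff_pow_le {a b : ℝ} {n : ℕ} (ha : 0 ≤ a) (hb : 0 ≤ b) (hn : n ≠ 0) :
    a ≤ b ^ (1 / (n : ℝ)) ↔ a ^ n ≤ b := by
  rw [one_div, Real.le_rpow_inv_iff_of_pos ha hb (by positivity), Real.rpow_natCast]

section RootTest

variable {a : ℕ → ℝ}

lemma isBoundedUnder_rpow_one_div {L c : ℝ} (ha : ∀ n, 0 ≤ a n) (hL : 0 ≤ L) (hc : 0 ≤ c)
    (h : ∀ n, a n ≤ L ^ n * c) :
    IsBoundedUnder (· ≤ ·) atTop fun n ↦ a n ^ (1 / (n : ℝ)) := by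
  refine isBoundedUnder_of_eventually_le (a := max 1 L * max 1 c) ?_
  filter_upwards [eventually_ge_atTop 1] with n hn
  rw [rpow_one_div_le_iff_le_pow (ha n) (by positivity) (by omega), mul_pow]
  calc a n ≤ L ^ n * c := h n
    _ ≤ max 1 L ^ n * max 1 c ^ n := by
      gcongr
      · exact le_max_right _ _
      · exact (le_max_right 1 c).trans (le_self_pow₀ (le_max_left _ _) (by omega))

lemma eventually_le_pow_of_limsup_rpow_lt {r : ℝ} (ha : ∀ n, 0 ≤ a n)
    (hb : IsBoundedUnder (· ≤ ·) atTop fun n ↦ a n ^ (1 / (n : ℝ)))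
    (h : limsup (fun n ↦ a n ^ (1 / (n : ℝ))) atTop < r) : ∀ᶠ n in atTop, a n ≤ r ^ n := by
  filter_upwards [eventually_lt_of_limsup_lt h hb, eventually_ge_atTop 1] with n hlt hn
  have hr : 0 ≤ r := (Real.rpow_nonneg (ha n) _).trans hlt.le
  exact (rpow_one_div_le_iff_le_pow (ha n) hr (by omega)).1 hlt.le

lemma le_limsup_rpow_of_pow_le {ε : ℝ} (hε : 0 ≤ ε) (ha : ∀ n, 0 ≤ a n)
    (hb : IsBoundedUnder (· ≤ ·) atTop fun n ↦ a n ^ (1 / (n : ℝ)))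
    (h : ∀ᶠ n in atTop, ε ^ n ≤ a n) : ε ≤ limsup (fun n ↦ a n ^ (1 / (n : ℝ))) atTop := by
  refine le_limsup_of_frequently_le (Eventually.frequently ?_) hb
  filter_upwards [h, eventually_ge_atTop 1] with n h hn
  exact (le_rpow_one_div_iff_pow_le hε (ha n) (by omega)).2 h

end RootTest

lemma map_partialSups_of_preservesSupOn [Lattice X] {C : Set X} {T : X → X} {f : ℕ → X}
    (hC : SupClosed C) (hT : PreservesSupOn C T) (hf : ∀ j, f j ∈ C) (n : ℕ) :
    T (partialSups f n) = partialSups (fun j ↦ T (f j)) n := by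
  induction n with
  | zero => simp
  | succ n ih =>
    have hmem : partialSups f n ∈ C := hC.finsetSup'_mem Finset.nonempty_Iic fun j _ ↦ hf j
    rw [partialSups_add_one, partialSups_add_one, ← ih, hT _ hmem _ (hf _)]

section Cone

variable [NormedAddCommGroup X] {C : Set X} {T : X → X}

lemma BoundedOnCone.exists_norm_le_mul_norm [NormedSpace ℝ X] (hbdd : BoundedOnCone C T)
    (hhom : PosHomOn C T) :
    ∃ L, 0 ≤ L ∧ ∀ x ∈ C, ‖T x‖ ≤ L * ‖x‖ := by
  obtain ⟨L, hL⟩ := hbdd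
  refine ⟨max L 0, le_max_right _ _, fun x hx ↦ ?_⟩
  rcases eq_or_ne x 0 with rfl | hx0
  · simpa using hhom 0 le_rfl 0 hx
  · rw [← div_le_iff₀ (norm_pos_iff.2 hx0)]
    exact (hL ⟨x, hx, hx0, rfl⟩).trans (le_max_left _ _)

lemma norm_iterate_le_pow_mul_norm (hTC : Set.MapsTo T C C) {L : ℝ} (hL0 : 0 ≤ L)
    (hL : ∀ x ∈ C, ‖T x‖ ≤ L * ‖x‖) {x : X} (hx : x ∈ C) (n : ℕ) :
    ‖T^[n] x‖ ≤ L ^ n * ‖x‖ := by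
  induction n with
  | zero => simp
  | succ n ih =>
    rw [Function.iterate_succ_apply', pow_succ', mul_assoc]
    exact (hL _ (hTC.iterate n hx)).trans (mul_le_mul_of_nonneg_left ih hL0)

lemma pow_mul_norm_le_norm_iterate (hTC : Set.MapsTo T C C) {ε : ℝ} (hε : 0 ≤ ε)
    (hε' : ∀ x ∈ C, ε * ‖x‖ ≤ ‖T x‖) {x : X} (hx : x ∈ C) (n : ℕ) :
    ε ^ n * ‖x‖ ≤ ‖T^[n] x‖ := by
  induction n with
  | zero => simp
  | succ n ih =>
    rw [Function.iterate_succ_apply', pow_succ', mul_assoc]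
    exact (mul_le_mul_of_nonneg_left ih hε).trans (hε' _ (hTC.iterate n hx))

lemma isBoundedUnder_localRadius [NormedSpace ℝ X] (hTC : Set.MapsTo T C C)
    (hbdd : BoundedOnCone C T) (hhom : PosHomOn C T) {x : X} (hx : x ∈ C) :
    IsBoundedUnder (· ≤ ·) atTop fun n ↦ ‖T^[n] x‖ ^ (1 / (n : ℝ)) := by
  obtain ⟨L, hL0, hL⟩ := hbdd.exists_norm_le_mul_norm hhom
  exact isBoundedUnder_rpow_one_div (fun _ ↦ norm_nonneg _) hL0 (norm_nonneg x)
    (norm_iterate_le_pow_mul_norm hTC hL0 hL hx)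

lemma localRadius_nonneg (C : Set X) (T : X → X) (x : X) : 0 ≤ localRadius C T x := by
  rw [localRadius, limsup_eq]
  refine Real.sInf_nonneg fun r hr ↦ ?_
  obtain ⟨n, hn⟩ := hr.exists
  exact (Real.rpow_nonneg (norm_nonneg _) _).trans hn

lemma coneNorm_nonneg (C : Set X) (S : X → X) : 0 ≤ coneNorm C S :=
  Real.sSup_nonneg fun _ ⟨_, _, _, hr⟩ ↦ hr ▸ by positivity

lemma pow_le_coneNorm_iterate {t : ℝ} (ht : 0 ≤ t) (h : t ≤ coneRadius C T) (n : ℕ) :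
    t ^ (n + 1) ≤ coneNorm C T^[n + 1] := by
  have hbdd : BddBelow (Set.range fun m : ℕ ↦ coneNorm C T^[m + 1] ^ ((1 : ℝ) / (m + 1))) :=
    ⟨0, Set.forall_mem_range.2 fun _ ↦ Real.rpow_nonneg (coneNorm_nonneg _ _) _⟩
  have h' := h.trans (ciInf_le hbdd n)
  rwa [← Nat.cast_add_one, le_rpow_one_div_iff_pow_le ht (coneNorm_nonneg _ _) n.succ_ne_zero]
    at h'

lemma exists_mul_norm_lt_norm_of_lt_coneNorm (hCne : ∃ x ∈ C, x ≠ 0) {S : X → X} {r : ℝ}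
    (h : r < coneNorm C S) : ∃ x ∈ C, x ≠ 0 ∧ r * ‖x‖ < ‖S x‖ := by
  obtain ⟨x₀, hx₀, hx₀0⟩ := hCne
  have hne : {r : ℝ | ∃ x ∈ C, x ≠ 0 ∧ r = ‖S x‖ / ‖x‖}.Nonempty := ⟨_, x₀, hx₀, hx₀0, rfl⟩
  obtain ⟨_, ⟨x, hx, hx0, rfl⟩, hr⟩ := exists_lt_of_lt_csSup hne h
  exact ⟨x, hx, hx0, (lt_div_iff₀ (norm_pos_iff.2 hx0)).1 hr⟩

lemma mem_apSpectrum_of_forall_exists [NormedSpace ℝ X] (hcone : IsCone C)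
    (hhom : PosHomOn C T) {t : ℝ} (ht : 0 ≤ t)
    (h : ∀ ε > 0, ∃ y ∈ C, y ≠ 0 ∧ ‖T y - t • y‖ ≤ ε * ‖y‖) :
    t ∈ apSpectrum C T := by
  refine ⟨ht, fun ε hε ↦ ?_⟩
  obtain ⟨y, hy, hy0, hTy⟩ := h (ε / 2) (half_pos hε)
  have hny : 0 < ‖y‖ := norm_pos_iff.2 hy0
  refine ⟨‖y‖⁻¹ • y, hcone _ (by positivity) _ hy, by simp [norm_smul, hny.ne'], ?_⟩
  rw [hhom _ (by positivity) _ hy, smul_comm, ← smul_sub, norm_smul, norm_inv, norm_norm,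
    inv_mul_lt_iff₀ hny]
  linarith [mul_pos hε hny]

lemma exists_orbit_fast_then_slow [NormedSpace ℝ X] (hCne : ∃ x ∈ C, x ≠ 0)
    (hTC : Set.MapsTo T C C) (hbdd : BoundedOnCone C T) (hhom : PosHomOn C T) {s t r : ℝ}
    (hs : 0 ≤ s) (hst : s < t) (htr : t < r) (ht1 : ∀ x ∈ C, localRadius C T x ≤ t)
    (ht2 : t ≤ coneRadius C T) (n : ℕ) :
    ∃ x ∈ C, x ≠ 0 ∧ s ^ (n + 1) * ‖x‖ < ‖T^[n + 1] x‖ ∧ ∀ᶠ m in atTop, ‖T^[m] x‖ ≤ r ^ m := by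
  obtain ⟨x, hx, hx0, hfast⟩ := exists_mul_norm_lt_norm_of_lt_coneNorm hCne
    ((pow_lt_pow_left₀ hst hs n.succ_ne_zero).trans_le
      (pow_le_coneNorm_iterate (hs.trans hst.le) ht2 n))
  exact ⟨x, hx, hx0, hfast, eventually_le_pow_of_limsup_rpow_lt (fun _ ↦ norm_nonneg _)
    (isBoundedUnder_localRadius hTC hbdd hhom hx) ((ht1 x hx).trans_lt htr)⟩

end Cone

lemma MaxCone.supClosed [NormedAddCommGroup X] [NormedSpace ℝ X] [Lattice X] {C : Set X}
    (hC : MaxCone C) : SupClosed C :=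
  fun a ha b hb ↦ hC.2.2 a ha b hb

section WeightedOrbit

variable [NormedAddCommGroup X] [NormedSpace ℝ X] [Lattice X] {C : Set X} {T : X → X}
  {w : ℕ → ℝ} {x : X}

def weightedOrbitSup (T : X → X) (w : ℕ → ℝ) (x : X) : ℕ → X :=
  partialSups fun j ↦ w j • T^[j] x

lemma le_weightedOrbitSup {j M : ℕ} (h : j ≤ M) : w j • T^[j] x ≤ weightedOrbitSup T w x M :=
  le_partialSups_of_le (fun j ↦ w j • T^[j] x) h

lemma weightedOrbitSup_mem (hC : MaxCone C) (hTC : Set.MapsTo T C C) (hw : ∀ j, 0 ≤ w j)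
    (hx : x ∈ C) (M : ℕ) : weightedOrbitSup T w x M ∈ C :=
  hC.supClosed.finsetSup'_mem Finset.nonempty_Iic fun j _ ↦ hC.1 _ (hw j) _ (hTC.iterate j hx)

lemma map_weightedOrbitSup (hC : MaxCone C) (hTC : Set.MapsTo T C C) (hhom : PosHomOn C T)
    (hsup : PreservesSupOn C T) (hw : ∀ j, 0 ≤ w j) (hx : x ∈ C) (M : ℕ) :
    T (weightedOrbitSup T w x M) = partialSups (fun j ↦ w j • T^[j + 1] x) M := by
  rw [weightedOrbitSup, map_partialSups_of_preservesSupOn hC.supClosed hsup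
    (fun j ↦ hC.1 _ (hw j) _ (hTC.iterate j hx))]
  simp only [hhom _ (hw _) _ (hTC.iterate _ hx), ← Function.iterate_succ_apply' T]

variable [HasSolidNorm X] [IsOrderedAddMonoid X]

lemma map_weightedOrbitSup_le (hC : MaxCone C) (hTC : Set.MapsTo T C C) (hhom : PosHomOn C T)
    (hsup : PreservesSupOn C T) (hw : ∀ j, 0 ≤ w j) (hx : x ∈ C) {c : ℝ} (hc : 0 ≤ c)
    (hwc : ∀ j, w j ≤ c * w (j + 1)) (M : ℕ) :
    T (weightedOrbitSup T w x M) ≤ c • weightedOrbitSup T w x M ⊔ w M • T^[M + 1] x := by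
  rw [map_weightedOrbitSup hC hTC hhom hsup hw hx]
  refine partialSups_le _ _ _ fun j hj ↦ ?_
  rcases hj.lt_or_eq with hj | rfl
  · refine le_sup_of_le_left ?_
    calc w j • T^[j + 1] x ≤ (c * w (j + 1)) • T^[j + 1] x :=
          smul_le_smul_of_nonneg_right (hwc j) (hC.2.1 _ (hTC.iterate _ hx))
      _ = c • (w (j + 1) • T^[j + 1] x) := mul_smul _ _ _
      _ ≤ c • weightedOrbitSup T w x M :=
          smul_le_smul_of_nonneg_left (le_weightedOrbitSup hj) hc
  · exact le_sup_right

lemma smul_weightedOrbitSup_le (hC : MaxCone C) (hTC : Set.MapsTo T C C) (hhom : PosHomOn C T)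
    (hsup : PreservesSupOn C T) (hw : ∀ j, 0 ≤ w j) (hx : x ∈ C) {t θ : ℝ} (ht : 0 < t)
    (hθ : 0 ≤ θ) (hwt : ∀ j, t * w (j + 1) ≤ θ * w j) (M : ℕ) :
    t • weightedOrbitSup T w x M ≤ (t * w 0) • x ⊔ θ • T (weightedOrbitSup T w x M) := by
  rw [weightedOrbitSup, ← OrderIso.smulRight_apply ht, ← map_partialSups (OrderIso.smulRight ht)]
  refine partialSups_le _ _ _ fun j hj ↦ ?_
  rcases j with _ | j
  · simp [smul_smul]
  · refine le_sup_of_le_right ?_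
    have hle : w j • T^[j + 1] x ≤ T (weightedOrbitSup T w x M) := by
      rw [map_weightedOrbitSup hC hTC hhom hsup hw hx]
      exact le_partialSups_of_le (fun i ↦ w i • T^[i + 1] x) (by omega)
    calc (OrderIso.smulRight ht) (w (j + 1) • T^[j + 1] x)
        = (t * w (j + 1)) • T^[j + 1] x := smul_smul _ _ _
      _ ≤ (θ * w j) • T^[j + 1] x :=
          smul_le_smul_of_nonneg_right (hwt j) (hC.2.1 _ (hTC.iterate _ hx))
      _ = θ • (w j • T^[j + 1] x) := mul_smul _ _ _
      _ ≤ θ • T (weightedOrbitSup T w x M) := smul_le_smul_of_nonneg_left hle hθ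

lemma norm_le_norm_weightedOrbitSup (hC : MaxCone C) (hTC : Set.MapsTo T C C)
    (hw : ∀ j, 0 ≤ w j) (hx : x ∈ C) {N M : ℕ} (hNM : N ≤ M) :
    w N * ‖T^[N] x‖ ≤ ‖weightedOrbitSup T w x M‖ := by
  have hN : 0 ≤ w N • T^[N] x := hC.2.1 _ (hC.1 _ (hw N) _ (hTC.iterate N hx))
  rw [← Real.norm_of_nonneg (hw N), ← norm_smul]
  refine norm_le_norm_of_abs_le_abs ?_
  rw [abs_of_nonneg hN, abs_of_nonneg (hN.trans (le_weightedOrbitSup hNM))]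
  exact le_weightedOrbitSup hNM

lemma norm_map_weightedOrbitSup_sub_smul_le (hC : MaxCone C) (hTC : Set.MapsTo T C C)
    (hhom : PosHomOn C T) (hsup : PreservesSupOn C T) (hw : ∀ j, 0 ≤ w j) (hx : x ∈ C)
    {t γ : ℝ} (ht : 0 < t) (hγ : 0 ≤ γ) (hw₁ : ∀ j, t * w (j + 1) ≤ (1 + γ) * w j)
    (hw₂ : ∀ j, w j ≤ (1 + γ) * t * w (j + 1)) (M : ℕ) :
    ‖T (weightedOrbitSup T w x M) - t • weightedOrbitSup T w x M‖ ≤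
      γ * t * ‖weightedOrbitSup T w x M‖ + w M * ‖T^[M + 1] x‖ +
        (t * w 0 * ‖x‖ + γ * ‖T (weightedOrbitSup T w x M)‖) := by
  set y := weightedOrbitSup T w x M
  have hyC : y ∈ C := weightedOrbitSup_mem hC hTC hw hx M
  have hy : 0 ≤ y := hC.2.1 _ hyC
  have hTy : 0 ≤ T y := hC.2.1 _ (hTC hyC)
  have hu : 0 ≤ w M • T^[M + 1] x := hC.2.1 _ (hC.1 _ (hw M) _ (hTC.iterate _ hx))
  have hx₀ : 0 ≤ (t * w 0) • x := hC.2.1 _ (hC.1 _ (mul_nonneg ht.le (hw 0)) _ hx)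
  have h₁ : T y - t • y ≤ (γ * t) • y + w M • T^[M + 1] x := by
    rw [sub_le_iff_le_add]
    calc T y ≤ ((1 + γ) * t) • y ⊔ w M • T^[M + 1] x :=
          map_weightedOrbitSup_le hC hTC hhom hsup hw hx (by positivity) hw₂ M
      _ ≤ ((1 + γ) * t) • y + w M • T^[M + 1] x :=
          sup_le (le_add_of_nonneg_right hu) (le_add_of_nonneg_left (by positivity))
      _ = (γ * t) • y + w M • T^[M + 1] x + t • y := by module
  have h₂ : t • y - T y ≤ (t * w 0) • x + γ • T y := by
    rw [sub_le_iff_le_add]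
    calc t • y ≤ (t * w 0) • x ⊔ (1 + γ) • T y :=
          smul_weightedOrbitSup_le hC hTC hhom hsup hw hx ht (by positivity) hw₁ M
      _ ≤ (t * w 0) • x + (1 + γ) • T y :=
          sup_le (le_add_of_nonneg_right (by positivity)) (le_add_of_nonneg_left hx₀)
      _ = (t * w 0) • x + γ • T y + T y := by module
  refine (norm_sub_le_of_sub_le h₁ h₂ (by positivity) (by positivity)).trans
    (add_le_add ((norm_add_le _ _).trans_eq ?_) ((norm_add_le _ _).trans_eq ?_)) <;>
  simp only [norm_smul, Real.norm_of_nonneg, ht.le, hγ, hw, mul_nonneg]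

end WeightedOrbit

section TentWeight

noncomputable def tentWeight (θ t : ℝ) (N j : ℕ) : ℝ :=
  θ ^ min (j : ℤ) (2 * N - j) / t ^ j

variable {θ t : ℝ} {N : ℕ}

lemma tentWeight_nonneg (hθ : 0 ≤ θ) (ht : 0 ≤ t) (j : ℕ) : 0 ≤ tentWeight θ t N j := by
  unfold tentWeight; positivity

@[simp]
lemma tentWeight_zero : tentWeight θ t N 0 = 1 := by
  simp [tentWeight]

lemma tentWeight_self : tentWeight θ t N N = θ ^ N / t ^ N := by
  simp [tentWeight, two_mul]

lemma tentWeight_of_le (hθ : θ ≠ 0) {M : ℕ} (hNM : N ≤ M) :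
    tentWeight θ t N M = θ ^ (2 * N) / θ ^ M / t ^ M := by
  rw [tentWeight, min_eq_right (by omega), zpow_sub₀ hθ]
  norm_cast

lemma mul_tentWeight_succ_le (hθ : 1 ≤ θ) (ht : 0 < t) (j : ℕ) :
    t * tentWeight θ t N (j + 1) ≤ θ * tentWeight θ t N j := by
  calc t * tentWeight θ t N (j + 1) = θ ^ min ((j + 1 : ℕ) : ℤ) (2 * N - (j + 1 : ℕ)) / t ^ j := by
        rw [tentWeight, pow_succ]; field_simp
    _ ≤ θ ^ (min (j : ℤ) (2 * N - j) + 1) / t ^ j := by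
        gcongr
        push_cast; omega
    _ = θ * tentWeight θ t N j := by
        rw [zpow_add_one₀ (by positivity), tentWeight]; ring

lemma tentWeight_le_mul_succ (hθ : 1 ≤ θ) (ht : 0 < t) (j : ℕ) :
    tentWeight θ t N j ≤ θ * t * tentWeight θ t N (j + 1) := by
  calc tentWeight θ t N j ≤ θ ^ (min ((j + 1 : ℕ) : ℤ) (2 * N - (j + 1 : ℕ)) + 1) / t ^ j := by
        rw [tentWeight]
        gcongr
        push_cast; omega
    _ = θ * t * tentWeight θ t N (j + 1) := by
        rw [zpow_add_one₀ (by positivity), tentWeight, pow_succ]; field_simp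

lemma tendsto_tentWeight_mul {a : ℝ} (ht : 0 < t) (ha : 0 ≤ a) (haθ : a < θ) {b : ℕ → ℝ}
    (hb₀ : ∀ m, 0 ≤ b m) (hb : ∀ᶠ m in atTop, b m ≤ (t * a) ^ (m + 1)) :
    Tendsto (fun M ↦ tentWeight θ t N M * b M) atTop (𝓝 0) := by
  have hθ : 0 < θ := ha.trans_lt haθ
  have hgeom : Tendsto (fun M : ℕ ↦ t * a * θ ^ (2 * N) * (a / θ) ^ M) atTop (𝓝 0) := by
    simpa using (tendsto_pow_atTop_nhds_zero_of_lt_one (by positivity)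
      ((div_lt_one hθ).2 haθ)).const_mul (t * a * θ ^ (2 * N))
  refine squeeze_zero' (Eventually.of_forall fun M ↦
    mul_nonneg (tentWeight_nonneg hθ.le ht.le M) (hb₀ M)) ?_ hgeom
  filter_upwards [hb, eventually_ge_atTop N] with M hbM hNM
  rw [tentWeight_of_le hθ.ne' hNM]
  calc θ ^ (2 * N) / θ ^ M / t ^ M * b M ≤ θ ^ (2 * N) / θ ^ M / t ^ M * (t * a) ^ (M + 1) := by
        gcongr
    _ = t * a * θ ^ (2 * N) * (a / θ) ^ M := by
        rw [div_pow, pow_succ, mul_pow]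
        field_simp

end TentWeight

lemma zero_mem_apSpectrum [NormedAddCommGroup X] [NormedSpace ℝ X] [Lattice X] {C : Set X}
    {T : X → X} (hC : MaxCone C) (hCne : ∃ x ∈ C, x ≠ 0) (hTC : Set.MapsTo T C C)
    (hbdd : BoundedOnCone C T) (hhom : PosHomOn C T) (h0 : ∀ x ∈ C, localRadius C T x ≤ 0) :
    0 ∈ apSpectrum C T := by
  refine mem_apSpectrum_of_forall_exists hC.1 hhom le_rfl fun ε hε ↦ ?_
  by_contra! hlow
  replace hlow : ∀ y ∈ C, ε * ‖y‖ ≤ ‖T y‖ := fun y hy ↦ by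
    rcases eq_or_ne y 0 with rfl | hy0
    · simp
    · simpa using (hlow y hy hy0).le
  obtain ⟨x₀, hx₀, hx₀0⟩ := hCne
  set x := ‖x₀‖⁻¹ • x₀
  have hx : x ∈ C := hC.1 _ (by positivity) _ hx₀
  have hx1 : ‖x‖ = 1 := by simp [x, norm_smul, norm_ne_zero_iff.2 hx₀0]
  have hε_le : ε ≤ localRadius C T x :=
    le_limsup_rpow_of_pow_le hε.le (fun _ ↦ norm_nonneg _)
      (isBoundedUnder_localRadius hTC hbdd hhom hx) (Eventually.of_forall fun n ↦ by
        simpa [hx1] using pow_mul_norm_le_norm_iterate hTC hε.le hlow hx n)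
  linarith [h0 x hx]

section ApproximateEigenvector

variable [NormedAddCommGroup X] [Lattice X] [HasSolidNorm X] [IsOrderedAddMonoid X]
  [NormedSpace ℝ X] {C : Set X} {T : X → X}

lemma pow_mul_norm_le_norm_weightedOrbitSup_tentWeight (hC : MaxCone C)
    (hTC : Set.MapsTo T C C) {x : X} (hx : x ∈ C) {θ t a : ℝ} (hθ : 0 < θ) (ht : 0 < t)
    {N M : ℕ} (hNM : N ≤ M) (hfast : (t * a / θ) ^ N * ‖x‖ ≤ ‖T^[N] x‖) :
    a ^ N * ‖x‖ ≤ ‖weightedOrbitSup T (tentWeight θ t N) x M‖ := by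
  have hw := tentWeight_nonneg (N := N) hθ.le ht.le
  calc a ^ N * ‖x‖ = tentWeight θ t N N * ((t * a / θ) ^ N * ‖x‖) := by
        rw [tentWeight_self, div_pow, mul_pow]; field_simp
    _ ≤ tentWeight θ t N N * ‖T^[N] x‖ := by gcongr; exact hw N
    _ ≤ ‖weightedOrbitSup T (tentWeight θ t N) x M‖ :=
        norm_le_norm_weightedOrbitSup hC hTC hw hx hNM

lemma exists_norm_map_sub_smul_le_of_pos (hC : MaxCone C) (hCne : ∃ x ∈ C, x ≠ 0)
    (hTC : Set.MapsTo T C C) (hbdd : BoundedOnCone C T) (hhom : PosHomOn C T)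
    (hsup : PreservesSupOn C T) {t : ℝ} (ht : 0 < t)
    (ht1 : ∀ x ∈ C, localRadius C T x ≤ t) (ht2 : t ≤ coneRadius C T) {ε : ℝ} (hε : 0 < ε) :
    ∃ y ∈ C, y ≠ 0 ∧ ‖T y - t • y‖ ≤ ε * ‖y‖ := by
  obtain ⟨L, hL0, hL⟩ := hbdd.exists_norm_le_mul_norm hhom
  set γ := ε / (4 * (t + L + 1)) with hγ
  have hγ0 : 0 < γ := by positivity
  have hγtL : γ * (t + L) ≤ ε / 4 := by
    rw [hγ, div_mul_eq_mul_div, div_le_div_iff₀ (by positivity) (by norm_num)]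
    nlinarith
  set a := 1 + γ / 2 with ha
  have ha1 : 1 < a := by linarith
  have haγ : a < 1 + γ := by linarith
  obtain ⟨n, hn⟩ : ∃ n : ℕ, 4 * t / ε < a ^ (n + 1) :=
    ((tendsto_pow_atTop_atTop_of_one_lt (by linarith)).comp
      (tendsto_add_atTop_nat 1)).eventually_gt_atTop _ |>.exists
  set N := n + 1
  have hs : t * a / (1 + γ) < t := by
    rw [div_lt_iff₀ (by positivity)]; exact mul_lt_mul_of_pos_left haγ ht
  obtain ⟨x, hx, hx0, hfast, hslow⟩ := exists_orbit_fast_then_slow hCne hTC hbdd hhom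
    (by positivity) hs (lt_mul_of_one_lt_right ht ha1) ht1 ht2 n
  set w := tentWeight (1 + γ) t N
  have hw : ∀ j, 0 ≤ w j := tentWeight_nonneg (by positivity) ht.le
  obtain ⟨M, hNM, htail⟩ : ∃ M, N ≤ M ∧ w M * ‖T^[M + 1] x‖ ≤ ε / 4 * (a ^ N * ‖x‖) :=
    ((eventually_ge_atTop N).and ((tendsto_tentWeight_mul ht (by positivity) haγ
      (fun _ ↦ norm_nonneg _) ((tendsto_add_atTop_nat 1).eventually hslow)).eventually
        (ge_mem_nhds (by positivity)))).exists
  set y := weightedOrbitSup T w x M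
  have hyC : y ∈ C := weightedOrbitSup_mem hC hTC hw hx M
  have hy : a ^ N * ‖x‖ ≤ ‖y‖ :=
    pow_mul_norm_le_norm_weightedOrbitSup_tentWeight hC hTC hx (by positivity) ht hNM hfast.le
  have hxy : t * ‖x‖ ≤ ε / 4 * ‖y‖ := by
    rw [div_lt_iff₀ hε] at hn
    nlinarith [norm_nonneg x]
  refine ⟨y, hyC, norm_pos_iff.1 (lt_of_lt_of_le (by positivity) hy), ?_⟩
  calc ‖T y - t • y‖ ≤ γ * t * ‖y‖ + w M * ‖T^[M + 1] x‖ + (t * w 0 * ‖x‖ + γ * ‖T y‖) :=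
        norm_map_weightedOrbitSup_sub_smul_le hC hTC hhom hsup hw hx ht hγ0.le
          (mul_tentWeight_succ_le (by linarith) ht) (tentWeight_le_mul_succ (by linarith) ht) M
    _ ≤ γ * t * ‖y‖ + ε / 4 * ‖y‖ + (ε / 4 * ‖y‖ + γ * (L * ‖y‖)) := by
        rw [show w 0 = 1 from tentWeight_zero, mul_one]
        have htail' : w M * ‖T^[M + 1] x‖ ≤ ε / 4 * ‖y‖ := htail.trans (by gcongr)
        have hTy : γ * ‖T y‖ ≤ γ * (L * ‖y‖) := by gcongr; exact hL y hyC
        linarith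
    _ ≤ ε * ‖y‖ := by nlinarith [norm_nonneg y]

end ApproximateEigenvector

/-- **Main theorem (Theorem 3.6).** Let `X` be a normed vector lattice, `C ⊆ X₊` a
non-zero max-cone, and `T : C → C` bounded, positively homogeneous and finite-suprema
preserving. If `sup {r_x(T) : x ∈ C} ≤ t ≤ r(T)`, then `t ∈ σ_ap(T)`.
In particular, `r(T) ∈ σ_ap(T)`. -/
theorem mem_apSpectrum_of_between [NormedAddCommGroup X] [Lattice X] [HasSolidNorm X]
    [IsOrderedAddMonoid X] [NormedSpace ℝ X]
    (C : Set X) (hC : MaxCone C) (hCne : ∃ x ∈ C, x ≠ 0)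
    (T : X → X) (hTC : Set.MapsTo T C C)
    (hbdd : BoundedOnCone C T) (hhom : PosHomOn C T) (hsup : PreservesSupOn C T)
    (t : ℝ) (ht1 : ∀ x ∈ C, localRadius C T x ≤ t) (ht2 : t ≤ coneRadius C T) :
    t ∈ apSpectrum C T ∧ coneRadius C T ∈ apSpectrum C T := by
  have hmem : ∀ s, (∀ x ∈ C, localRadius C T x ≤ s) → s ≤ coneRadius C T →
      s ∈ apSpectrum C T := by
    intro s hs1 hs2
    have ⟨x₀, hx₀, _⟩ := hCne
    rcases ((localRadius_nonneg C T x₀).trans (hs1 x₀ hx₀)).eq_or_lt with rfl | hs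
    · exact zero_mem_apSpectrum hC hCne hTC hbdd hhom hs1
    · exact mem_apSpectrum_of_forall_exists hC.1 hhom hs.le fun ε hε ↦
        exists_norm_map_sub_smul_le_of_pos hC hCne hTC hbdd hhom hsup hs hs1 hs2 hε
  exact ⟨hmem t ht1 ht2, hmem _ (fun x hx ↦ (ht1 x hx).trans ht2) le_rfl⟩
end

section
/- Let X be a normed space, C ⊆ X a non-zero normal wedge, and T : C → C positively homogeneous, additive, and Lipschitz. If t is a real number with sup{r_x(T) : x ∈ C} ≤ t ≤ r(T), then t ∈ σ_ap(T). In particular r(T) ∈ σ_ap(T), and moreover r(T) = max{t : t ∈ σ_ap(T)}. -/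
open Filter Topology Bornology Pointwise

variable {X : Type*}

section WedgeDefs

variable [NormedAddCommGroup X] [NormedSpace ℝ X]

/-- A wedge: a convex cone, i.e. `tC ⊆ C` for `t ≥ 0` and `C + C ⊆ C`. -/
def IsWedge (C : Set X) : Prop :=
  IsCone C ∧ ∀ x ∈ C, ∀ y ∈ C, x + y ∈ C

/-- A normal wedge: a wedge such that for some `M > 0`, `‖x‖ ≤ M ‖y‖` whenever
`x, y ∈ C` and `y - x ∈ C`. -/
def IsNormalWedge (C : Set X) : Prop :=
  IsWedge C ∧ ∃ M : ℝ, 0 < M ∧ ∀ x ∈ C, ∀ y ∈ C, y - x ∈ C → ‖x‖ ≤ M * ‖y‖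

/-- `T` is additive on `C`. -/
def AdditiveOn (C : Set X) (T : X → X) : Prop :=
  ∀ x ∈ C, ∀ y ∈ C, T (x + y) = T x + T y

end WedgeDefs
section Aux
variable [NormedAddCommGroup X] [NormedSpace ℝ X]
variable {C : Set X} {T : X → X}

lemma iter_mem (hTC : Set.MapsTo T C C) (n : ℕ) {x : X} (hx : x ∈ C) : T^[n] x ∈ C := by
  induction n with
  | zero => simpa using hx
  | succ n ih => rw [Function.iterate_succ_apply']; exact hTC ih

lemma sum_mem_cone (hW : IsWedge C) (h0 : (0:X) ∈ C) {ι : Type*} (s : Finset ι)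
    (c : ι → ℝ) (u : ι → X) (hc : ∀ i ∈ s, 0 ≤ c i) (hu : ∀ i ∈ s, u i ∈ C) :
    ∑ i ∈ s, c i • u i ∈ C := by
  classical
  induction s using Finset.induction with
  | empty => simpa using h0
  | insert a s' hni ih =>
    rw [Finset.sum_insert hni]
    exact hW.2 _ (hW.1 _ (hc a (Finset.mem_insert_self a s')) _
      (hu a (Finset.mem_insert_self a s'))) _
      (ih (fun i hi => hc i (Finset.mem_insert_of_mem hi))
        (fun i hi => hu i (Finset.mem_insert_of_mem hi)))

lemma T_sum (hW : IsWedge C) (h0 : (0:X) ∈ C) (hT0 : T 0 = 0)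
    (hhom : PosHomOn C T) (hadd : AdditiveOn C T) {ι : Type*} (s : Finset ι)
    (c : ι → ℝ) (u : ι → X) (hc : ∀ i ∈ s, 0 ≤ c i) (hu : ∀ i ∈ s, u i ∈ C) :
    T (∑ i ∈ s, c i • u i) = ∑ i ∈ s, c i • T (u i) := by
  classical
  induction s using Finset.induction with
  | empty => simpa using hT0
  | insert a s' hni ih =>
    have hca := hc a (Finset.mem_insert_self a s')
    have hua := hu a (Finset.mem_insert_self a s')
    have hc' := fun i hi => hc i (Finset.mem_insert_of_mem hi)
    have hu' := fun i hi => hu i (Finset.mem_insert_of_mem hi)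
    rw [Finset.sum_insert hni, hadd _ (hW.1 _ hca _ hua) _
      (sum_mem_cone hW h0 s' c u hc' hu'), hhom _ hca _ hua, ih hc' hu',
      Finset.sum_insert hni]

end Aux
section Aux2
variable [NormedAddCommGroup X] [NormedSpace ℝ X]
variable {C : Set X} {T : X → X}

lemma iter_hom (hTC : Set.MapsTo T C C) (hhom : PosHomOn C T) (n : ℕ)
    {c : ℝ} (hc : 0 ≤ c) {x : X} (hx : x ∈ C) : T^[n] (c • x) = c • T^[n] x := by
  induction n with
  | zero => simp
  | succ n ih =>
    rw [Function.iterate_succ_apply', Function.iterate_succ_apply', ih,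
      hhom _ hc _ (iter_mem hTC n hx)]

lemma iter_lip (hTC : Set.MapsTo T C C) {L : ℝ} (hL0 : 0 ≤ L)
    (hL : ∀ x ∈ C, ∀ y ∈ C, ‖T x - T y‖ ≤ L * ‖x - y‖) (n : ℕ)
    {x y : X} (hx : x ∈ C) (hy : y ∈ C) :
    ‖T^[n] x - T^[n] y‖ ≤ L ^ n * ‖x - y‖ := by
  induction n with
  | zero => simp
  | succ n ih =>
    rw [Function.iterate_succ_apply', Function.iterate_succ_apply']
    calc ‖T (T^[n] x) - T (T^[n] y)‖ ≤ L * ‖T^[n] x - T^[n] y‖ :=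
          hL _ (iter_mem hTC n hx) _ (iter_mem hTC n hy)
      _ ≤ L * (L ^ n * ‖x - y‖) := mul_le_mul_of_nonneg_left ih hL0
      _ = L ^ (n+1) * ‖x - y‖ := by ring

lemma iter_norm_le (hTC : Set.MapsTo T C C) (h0 : (0:X) ∈ C) (hT0 : T 0 = 0)
    {L : ℝ} (hL0 : 0 ≤ L) (hL : ∀ x ∈ C, ∀ y ∈ C, ‖T x - T y‖ ≤ L * ‖x - y‖) (n : ℕ)
    {x : X} (hx : x ∈ C) : ‖T^[n] x‖ ≤ L ^ n * ‖x‖ := by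
  have := iter_lip hTC hL0 hL n hx h0
  rwa [Function.iterate_fixed hT0, sub_zero, sub_zero] at this

/-- Telescoping identity for weighted orbit sums. -/
lemma tele (hW : IsWedge C) (h0 : (0:X) ∈ C) (hT0 : T 0 = 0)
    (hTC : Set.MapsTo T C C) (hhom : PosHomOn C T) (hadd : AdditiveOn C T)
    (w : ℕ → ℝ) (hw : ∀ j, 0 ≤ w j) (t : ℝ) (n : ℕ) {x : X} (hx : x ∈ C) :
    T (∑ j ∈ Finset.range (n+1), w j • T^[j] x)
      - t • (∑ j ∈ Finset.range (n+1), w j • T^[j] x)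
    = (∑ j ∈ Finset.range n, (w j - t * w (j+1)) • T^[j+1] x)
        + w n • T^[n+1] x - (t * w 0) • x := by
  have hTapp : T (∑ j ∈ Finset.range (n+1), w j • T^[j] x)
      = ∑ j ∈ Finset.range (n+1), w j • T^[j+1] x := by
    rw [T_sum hW h0 hT0 hhom hadd _ _ _ (fun i _ => hw i)
      (fun i _ => iter_mem hTC i hx)]
    exact Finset.sum_congr rfl fun j _ => by
      rw [Function.iterate_succ_apply']
  rw [hTapp]
  rw [Finset.sum_range_succ]
  have h2 : t • ∑ j ∈ Finset.range (n+1), w j • T^[j] x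
      = (t * w 0) • x + ∑ j ∈ Finset.range n, (t * w (j+1)) • T^[j+1] x := by
    rw [Finset.smul_sum, Finset.sum_range_succ']
    simp [smul_smul]
    abel
  rw [h2]
  simp only [sub_smul]
  rw [Finset.sum_sub_distrib]
  abel

end Aux2
section Aux3
variable [NormedAddCommGroup X] [NormedSpace ℝ X]
variable {C : Set X} {T : X → X}

lemma ratio_bdd (F : X → X) {B : ℝ} (hB : ∀ x ∈ C, ‖F x‖ ≤ B * ‖x‖) :
    BddAbove {r : ℝ | ∃ x ∈ C, x ≠ 0 ∧ r = ‖F x‖ / ‖x‖} := by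
  refine ⟨B, fun r hr => ?_⟩
  obtain ⟨x, hx, hx0, rfl⟩ := hr
  rw [div_le_iff₀ (norm_pos_iff.2 hx0)]
  exact hB x hx

lemma ratio_nonempty (F : X → X) {x₀ : X} (hx₀ : x₀ ∈ C) (hx0 : x₀ ≠ 0) :
    Set.Nonempty {r : ℝ | ∃ x ∈ C, x ≠ 0 ∧ r = ‖F x‖ / ‖x‖} :=
  ⟨_, x₀, hx₀, hx0, rfl⟩

lemma coneNorm_nonneg_s12 (F : X → X) {B : ℝ} (hB : ∀ x ∈ C, ‖F x‖ ≤ B * ‖x‖)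
    {x₀ : X} (hx₀ : x₀ ∈ C) (hx0 : x₀ ≠ 0) : 0 ≤ coneNorm C F :=
  le_trans (div_nonneg (norm_nonneg _) (norm_nonneg _)) (le_csSup (ratio_bdd F hB) ⟨x₀, hx₀, hx0, rfl⟩)

lemma norm_le_coneNorm (F : X → X) {B : ℝ} (hB : ∀ x ∈ C, ‖F x‖ ≤ B * ‖x‖)
    {x : X} (hx : x ∈ C) (hx1 : ‖x‖ = 1) : ‖F x‖ ≤ coneNorm C F := by
  have : ‖F x‖ / ‖x‖ ≤ coneNorm C F :=
    le_csSup (ratio_bdd F hB) ⟨x, hx, fun h => by simp [h] at hx1, rfl⟩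
  rwa [hx1, div_one] at this

lemma exists_unit_witness (hCone : IsCone C) (F : X → X)
    (hFhom : ∀ c : ℝ, 0 ≤ c → ∀ x ∈ C, F (c • x) = c • F x)
    {B : ℝ} (hB : ∀ x ∈ C, ‖F x‖ ≤ B * ‖x‖)
    {x₀ : X} (hx₀ : x₀ ∈ C) (hx0 : x₀ ≠ 0)
    {b : ℝ} (hb : b < coneNorm C F) :
    ∃ u ∈ C, ‖u‖ = 1 ∧ b < ‖F u‖ := by
  obtain ⟨r, hr, hbr⟩ := exists_lt_of_lt_csSup (ratio_nonempty F hx₀ hx0) hb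
  obtain ⟨x, hx, hxne, rfl⟩ := hr
  have hxn : (0:ℝ) < ‖x‖ := norm_pos_iff.2 hxne
  refine ⟨‖x‖⁻¹ • x, hCone _ (by positivity) _ hx, ?_, ?_⟩
  · rw [norm_smul, norm_inv, norm_norm, inv_mul_cancel₀ hxn.ne']
  · rw [hFhom _ (by positivity) _ hx, norm_smul, norm_inv, norm_norm]
    rwa [div_eq_inv_mul] at hbr

lemma pow_le_coneNorm_iter {t : ℝ} (ht0 : 0 ≤ t) (ht : t ≤ coneRadius C T)
    {B : ℕ → ℝ} (hB : ∀ n, ∀ x ∈ C, ‖T^[n] x‖ ≤ B n * ‖x‖)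
    {x₀ : X} (hx₀ : x₀ ∈ C) (hx0 : x₀ ≠ 0) (n : ℕ) :
    t ^ (n+1) ≤ coneNorm C (T^[n+1]) := by
  have hcn : 0 ≤ coneNorm C (T^[n+1]) := coneNorm_nonneg_s12 _ (hB (n+1)) hx₀ hx0
  have hbdd : BddBelow (Set.range fun n : ℕ =>
      (coneNorm C (T^[n + 1])) ^ ((1 : ℝ) / (n + 1))) := by
    refine ⟨0, fun r hr => ?_⟩
    obtain ⟨m, rfl⟩ := hr
    exact Real.rpow_nonneg (coneNorm_nonneg_s12 _ (hB (m+1)) hx₀ hx0) _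
  have h1 : t ≤ (coneNorm C (T^[n+1])) ^ ((1:ℝ) / (n+1)) :=
    le_trans ht (ciInf_le hbdd n)
  have h2 := pow_le_pow_left₀ ht0 h1 (n+1)
  calc t ^ (n+1) ≤ ((coneNorm C (T^[n+1])) ^ ((1:ℝ) / (n+1))) ^ (n+1) := h2
    _ = coneNorm C (T^[n+1]) := by
        rw [← Real.rpow_natCast ((coneNorm C (T^[n+1])) ^ ((1:ℝ) / (n+1))) (n+1),
          ← Real.rpow_mul hcn]
        push_cast
        rw [one_div_mul_cancel (by positivity : ((n:ℝ)+1) ≠ 0), Real.rpow_one]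

end Aux3
section Aux4
variable [NormedAddCommGroup X] [NormedSpace ℝ X]
variable {C : Set X} {T : X → X}

lemma rpow_inv_nat_le_max {b : ℝ} (hb : 0 ≤ b) (n : ℕ) :
    b ^ ((1:ℝ)/n) ≤ max 1 b := by
  rcases n with _ | m
  · simp
  by_cases h1 : b ≤ 1
  · exact le_max_of_le_left (Real.rpow_le_one hb h1 (by positivity))
  · push_neg at h1
    refine le_max_of_le_right ?_
    calc b ^ ((1:ℝ)/(m+1:ℕ)) ≤ b ^ (1:ℝ) :=
          Real.rpow_le_rpow_of_exponent_le h1.le (by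
            rw [div_le_one (by positivity)]
            push_cast; linarith)
      _ = b := Real.rpow_one b

lemma pow_rpow_inv_nat {b : ℝ} (hb : 0 ≤ b) {n : ℕ} (hn : n ≠ 0) :
    ((b ^ n : ℝ)) ^ ((1:ℝ)/n) = b := by
  rw [← Real.rpow_natCast b n, ← Real.rpow_mul hb, mul_one_div,
    div_self (by exact_mod_cast hn), Real.rpow_one]

lemma rpow_inv_nat_pow {b : ℝ} (hb : 0 ≤ b) {n : ℕ} (hn : n ≠ 0) :
    (b ^ ((1:ℝ)/n)) ^ n = b := by
  rw [← Real.rpow_natCast (b ^ ((1:ℝ)/n)) n, ← Real.rpow_mul hb,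
    one_div_mul_cancel (by exact_mod_cast hn), Real.rpow_one]

lemma orbit_rpow_bdd (hTC : Set.MapsTo T C C) (h0 : (0:X) ∈ C) (hT0 : T 0 = 0)
    {L : ℝ} (hL0 : 0 ≤ L) (hL : ∀ x ∈ C, ∀ y ∈ C, ‖T x - T y‖ ≤ L * ‖x - y‖)
    {x : X} (hx : x ∈ C) :
    Filter.atTop.IsBoundedUnder (· ≤ ·) (fun n : ℕ => ‖T^[n] x‖ ^ ((1:ℝ)/n)) := by
  refine Filter.isBoundedUnder_of ⟨max 1 (L * max 1 ‖x‖), fun n => ?_⟩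
  rcases n with _ | m
  · simp
  set n := m + 1
  have hn : n ≠ 0 := Nat.succ_ne_zero m
  calc ‖T^[n] x‖ ^ ((1:ℝ)/n) ≤ (L ^ n * ‖x‖) ^ ((1:ℝ)/n) :=
        Real.rpow_le_rpow (norm_nonneg _) (iter_norm_le hTC h0 hT0 hL0 hL n hx)
          (by positivity)
    _ = L * ‖x‖ ^ ((1:ℝ)/n) := by
        rw [Real.mul_rpow (by positivity) (norm_nonneg _), pow_rpow_inv_nat hL0 hn]
    _ ≤ L * max 1 ‖x‖ :=
        mul_le_mul_of_nonneg_left (rpow_inv_nat_le_max (norm_nonneg _) n) hL0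
    _ ≤ max 1 (L * max 1 ‖x‖) := le_max_right _ _

lemma localRadius_nonneg_s12 (hTC : Set.MapsTo T C C) (h0 : (0:X) ∈ C) (hT0 : T 0 = 0)
    {L : ℝ} (hL0 : 0 ≤ L) (hL : ∀ x ∈ C, ∀ y ∈ C, ‖T x - T y‖ ≤ L * ‖x - y‖)
    {x : X} (hx : x ∈ C) : 0 ≤ localRadius C T x :=
  Filter.le_limsup_of_frequently_le
    (Filter.Frequently.of_forall fun n => Real.rpow_nonneg (norm_nonneg _) _)
    (orbit_rpow_bdd hTC h0 hT0 hL0 hL hx)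

lemma orbit_eventually_le (hTC : Set.MapsTo T C C) (h0 : (0:X) ∈ C) (hT0 : T 0 = 0)
    {L : ℝ} (hL0 : 0 ≤ L) (hL : ∀ x ∈ C, ∀ y ∈ C, ‖T x - T y‖ ≤ L * ‖x - y‖)
    {x : X} (hx : x ∈ C) {t ρ : ℝ} (hlr : localRadius C T x ≤ t) (hρ : t < ρ) :
    ∀ᶠ n in Filter.atTop, ‖T^[n] x‖ ≤ ρ ^ n := by
  have h2 := Filter.eventually_lt_of_limsup_lt (lt_of_le_of_lt hlr hρ)
    (orbit_rpow_bdd hTC h0 hT0 hL0 hL hx)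
  filter_upwards [h2, Filter.eventually_ge_atTop 1] with n hn hn1
  have hn0 : n ≠ 0 := by omega
  have hρ0 : 0 ≤ ρ := le_of_lt (lt_of_le_of_lt (Real.rpow_nonneg (norm_nonneg _) _) hn)
  calc ‖T^[n] x‖ = (‖T^[n] x‖ ^ ((1:ℝ)/n)) ^ n := (rpow_inv_nat_pow (norm_nonneg _) hn0).symm
    _ ≤ ρ ^ n := pow_le_pow_left₀ (Real.rpow_nonneg (norm_nonneg _) _) hn.le n

lemma le_localRadius (hTC : Set.MapsTo T C C) (h0 : (0:X) ∈ C) (hT0 : T 0 = 0)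
    {L : ℝ} (hL0 : 0 ≤ L) (hL : ∀ x ∈ C, ∀ y ∈ C, ‖T x - T y‖ ≤ L * ‖x - y‖)
    {x : X} (hx : x ∈ C) (hxne : x ≠ 0) {ε : ℝ} (hε : 0 < ε)
    (hlow : ∀ y ∈ C, ε * ‖y‖ ≤ ‖T y‖) {c : ℝ} (hc : c < ε) :
    c ≤ localRadius C T x := by
  have horb : ∀ n : ℕ, ε ^ n * ‖x‖ ≤ ‖T^[n] x‖ := by
    intro n
    induction n with
    | zero => simp
    | succ n ih =>
      rw [Function.iterate_succ_apply']
      calc ε ^ (n+1) * ‖x‖ = ε * (ε ^ n * ‖x‖) := by ring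
        _ ≤ ε * ‖T^[n] x‖ := mul_le_mul_of_nonneg_left ih hε.le
        _ ≤ ‖T (T^[n] x)‖ := hlow _ (iter_mem hTC n hx)
  have hxn : (0:ℝ) < ‖x‖ := norm_pos_iff.2 hxne
  have htend : Filter.Tendsto (fun n : ℕ => ε * ‖x‖ ^ ((1:ℝ)/n)) Filter.atTop
      (nhds (ε * 1)) := by
    refine Filter.Tendsto.const_mul ε ?_
    have h1 : ContinuousAt (fun q : ℝ => ‖x‖ ^ q) 0 := Real.continuousAt_const_rpow hxn.ne'
    have h2 := h1.tendsto.comp tendsto_one_div_atTop_nhds_zero_nat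
    simpa [Function.comp_def] using h2
  rw [mul_one] at htend
  have hev : ∀ᶠ n : ℕ in Filter.atTop, c ≤ ε * ‖x‖ ^ ((1:ℝ)/n) :=
    (htend.eventually_const_lt hc).mono fun n hn => hn.le
  refine Filter.le_limsup_of_frequently_le ?_ (orbit_rpow_bdd hTC h0 hT0 hL0 hL hx)
  refine ((hev.and (Filter.eventually_ge_atTop 1)).mono fun n ⟨hn, hn1⟩ => ?_).frequently
  have hn0 : n ≠ 0 := by omega
  calc c ≤ ε * ‖x‖ ^ ((1:ℝ)/n) := hn
    _ = (ε ^ n * ‖x‖) ^ ((1:ℝ)/n) := by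
        rw [Real.mul_rpow (by positivity) (norm_nonneg _), pow_rpow_inv_nat hε.le hn0]
    _ ≤ ‖T^[n] x‖ ^ ((1:ℝ)/n) :=
        Real.rpow_le_rpow (by positivity) (horb n) (by positivity)

end Aux4
section Aux5
variable [NormedAddCommGroup X] [NormedSpace ℝ X]
variable {C : Set X} {T : X → X}

lemma apSpectrum_le_coneRadius (hTC : Set.MapsTo T C C) (hCone : IsCone C)
    (h0 : (0:X) ∈ C) (hT0 : T 0 = 0) (hhom : PosHomOn C T)
    {L : ℝ} (hL0 : 0 < L) (hL : ∀ x ∈ C, ∀ y ∈ C, ‖T x - T y‖ ≤ L * ‖x - y‖)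
    {x₀ : X} (hx₀ : x₀ ∈ C) (hx0 : x₀ ≠ 0)
    {s : ℝ} (hs : s ∈ apSpectrum C T) : s ≤ coneRadius C T := by
  obtain ⟨hs0, hsap⟩ := hs
  refine le_ciInf fun n => ?_
  set N := n + 1 with hN
  have hN0 : N ≠ 0 := Nat.succ_ne_zero n
  have hBiter : ∀ m : ℕ, ∀ x ∈ C, ‖T^[m] x‖ ≤ L ^ m * ‖x‖ :=
    fun m x hx => iter_norm_le hTC h0 hT0 hL0.le hL m hx
  have hcn0 : 0 ≤ coneNorm C (T^[N]) := coneNorm_nonneg_s12 _ (hBiter N) hx₀ hx0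
  have stepA : s ^ N ≤ coneNorm C (T^[N]) := by
    refine le_of_forall_pos_le_add fun ε' hε' => ?_
    set CN : ℝ := ∑ j ∈ Finset.range N, s ^ (N-1-j) * L ^ j with hCN
    have hCN0 : 0 ≤ CN := Finset.sum_nonneg fun j _ => by positivity
    set δ : ℝ := ε' / (CN + 1) with hδ
    have hδ0 : 0 < δ := by positivity
    obtain ⟨x, hx, hx1, hxδ⟩ := hsap δ hδ0
    have key : ‖T^[N] x - s ^ N • x‖ ≤ CN * δ := by
      have htele : T^[N] x - s ^ N • x
          = ∑ j ∈ Finset.range N,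
              (s ^ (N-(j+1)) • T^[j+1] x - s ^ (N-j) • T^[j] x) := by
        rw [Finset.sum_range_sub (fun j => s ^ (N-j) • T^[j] x) N]
        simp
      rw [htele]
      refine le_trans (norm_sum_le _ _) ?_
      rw [hCN, Finset.sum_mul]
      refine Finset.sum_le_sum fun j hj => ?_
      have hjN : j < N := Finset.mem_range.1 hj
      have h1 : N - (j+1) = N-1-j := by omega
      have h2 : N - j = (N-1-j) + 1 := by omega
      rw [h1, h2, pow_succ, mul_smul, ← smul_sub]
      rw [norm_smul, Real.norm_eq_abs, abs_of_nonneg (by positivity), mul_assoc]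
      refine mul_le_mul_of_nonneg_left ?_ (by positivity)
      rw [Function.iterate_succ_apply, ← iter_hom hTC hhom j hs0 hx]
      calc ‖T^[j] (T x) - T^[j] (s • x)‖ ≤ L ^ j * ‖T x - s • x‖ :=
            iter_lip hTC hL0.le hL j (hTC hx) (hCone _ hs0 _ hx)
        _ ≤ L ^ j * δ := mul_le_mul_of_nonneg_left hxδ.le (by positivity)
    have hnorm : ‖T^[N] x‖ ≤ coneNorm C (T^[N]) :=
      norm_le_coneNorm _ (hBiter N) hx hx1
    have hfin : CN * δ ≤ ε' := by
      have h3 : CN * δ = CN * ε' / (CN+1) := by rw [hδ]; ring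
      rw [h3, div_le_iff₀ (by positivity)]
      nlinarith
    calc s ^ N = ‖s ^ N • x‖ := by
          rw [norm_smul, Real.norm_eq_abs, abs_of_nonneg (by positivity), hx1, mul_one]
      _ ≤ ‖T^[N] x‖ + ‖T^[N] x - s ^ N • x‖ := by
          have := norm_sub_le (T^[N] x) (T^[N] x - s ^ N • x)
          simpa using this
      _ ≤ coneNorm C (T^[N]) + CN * δ := add_le_add hnorm key
      _ ≤ coneNorm C (T^[N]) + ε' := add_le_add_right hfin _
  have stepB : s ≤ (coneNorm C (T^[N])) ^ ((1:ℝ)/(N:ℝ)) := by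
    calc s = ((s ^ N : ℝ)) ^ ((1:ℝ)/(N:ℝ)) := (pow_rpow_inv_nat hs0 hN0).symm
      _ ≤ (coneNorm C (T^[N])) ^ ((1:ℝ)/(N:ℝ)) :=
          Real.rpow_le_rpow (by positivity) stepA (by positivity)
  have hcast : ((N:ℝ)) = (n:ℝ) + 1 := by push_cast [hN]; ring
  rwa [hcast] at stepB

end Aux5
section Aux6
variable [NormedAddCommGroup X] [NormedSpace ℝ X]
variable {C : Set X} {T : X → X}

lemma tent_bound (hW : IsWedge C) (h0 : (0:X) ∈ C) (hT0 : T 0 = 0)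
    (hTC : Set.MapsTo T C C) (hhom : PosHomOn C T) (hadd : AdditiveOn C T)
    {M : ℝ} (hM0 : 0 < M) (hM : ∀ x ∈ C, ∀ y ∈ C, y - x ∈ C → ‖x‖ ≤ M * ‖y‖)
    {t ε : ℝ} (ht : 0 < t) (hε : 0 < ε)
    (hA : ∀ y ∈ C, ε * ‖y‖ ≤ ‖T y - t • y‖)
    {x : X} (hx : x ∈ C) (hx1 : ‖x‖ = 1) (h : ℕ)
    (hbig : t ^ (2*h+1) / 2 ≤ ‖T^[2*h+1] x‖) :
    t ^ h * (1 + ε/(4*M*t)) ^ h * ‖T^[h] x‖ ≤ (6*M/ε) * ‖T^[2*h+1] x‖ := by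
  set s : ℝ := 1 + ε/(4*M*t) with hsdef
  have hs1 : 1 < s := by rw [hsdef]; nlinarith [div_pos hε (by positivity : (0:ℝ) < 4*M*t)]
  have hs0 : (0:ℝ) < s := by linarith
  set W : ℕ → ℝ := fun j => t ^ (2*h - j) * s ^ (min j (2*h - j)) with hWdef
  have hW0 : ∀ j, 0 ≤ W j := fun j => by positivity
  set z : ℕ → X := fun j => T^[j] x with hzdef
  have hz : ∀ j, z j ∈ C := fun j => iter_mem hTC j hx
  set y : X := ∑ j ∈ Finset.range (2*h+1), W j • z j with hydef
  have hy : y ∈ C := sum_mem_cone hW h0 _ _ _ (fun i _ => hW0 i) (fun i _ => hz i)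
  -- telescoping
  have htele := tele hW h0 hT0 hTC hhom hadd W hW0 t (2*h) hx
  -- the two halves
  set Y₁ : X := ∑ j ∈ Finset.Ico 0 h, W (j+1) • z (j+1) with hY₁def
  set Y₂ : X := ∑ j ∈ Finset.Ico h (2*h), W (j+1) • z (j+1) with hY₂def
  have hY₁ : Y₁ ∈ C := sum_mem_cone hW h0 _ _ _ (fun i _ => hW0 _) (fun i _ => hz _)
  have hY₂ : Y₂ ∈ C := sum_mem_cone hW h0 _ _ _ (fun i _ => hW0 _) (fun i _ => hz _)
  have hmid : ∑ j ∈ Finset.range (2*h), (W j - t * W (j+1)) • z (j+1)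
      = ((s-1)*t) • Y₂ - ((s-1)*t/s) • Y₁ := by
    rw [Finset.range_eq_Ico, ← Finset.sum_Ico_consecutive _ (Nat.zero_le h) (by omega)]
    have e1 : ∑ j ∈ Finset.Ico 0 h, (W j - t * W (j+1)) • z (j+1)
        = -(((s-1)*t/s) • Y₁) := by
      rw [hY₁def, Finset.smul_sum, ← Finset.sum_neg_distrib]
      refine Finset.sum_congr rfl fun j hj => ?_
      have hjh : j < h := (Finset.mem_Ico.1 hj).2
      have m1 : W j = t ^ ((2*h - (j+1)) + 1) * s ^ j := by
        simp only [hWdef]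
        rw [Nat.min_eq_left (by omega), show 2*h - j = (2*h - (j+1)) + 1 from by omega]
      have m2 : W (j+1) = t ^ (2*h - (j+1)) * s ^ (j+1) := by
        simp only [hWdef]
        rw [Nat.min_eq_left (by omega)]
      have hc : W j - t * W (j+1) = -((s-1)*t/s * W (j+1)) := by
        rw [m1, m2]
        have hsne : s ≠ 0 := hs0.ne'
        field_simp
        ring
      rw [hc, neg_smul, smul_smul]
    have e2 : ∑ j ∈ Finset.Ico h (2*h), (W j - t * W (j+1)) • z (j+1)
        = ((s-1)*t) • Y₂ := by
      rw [hY₂def, Finset.smul_sum]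
      refine Finset.sum_congr rfl fun j hj => ?_
      obtain ⟨hjh, hj2h⟩ := Finset.mem_Ico.1 hj
      have m1 : W j = t ^ ((2*h - (j+1)) + 1) * s ^ ((2*h - (j+1)) + 1) := by
        simp only [hWdef]
        rw [Nat.min_eq_right (by omega), show 2*h - j = (2*h - (j+1)) + 1 from by omega]
      have m2 : W (j+1) = t ^ (2*h - (j+1)) * s ^ (2*h - (j+1)) := by
        simp only [hWdef]
        rw [Nat.min_eq_right (by omega)]
      have hc : W j - t * W (j+1) = (s-1)*t * W (j+1) := by
        rw [m1, m2]; ring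
      rw [hc, smul_smul]
    rw [e1, e2]
    abel
  have hW2h : W (2*h) = 1 := by simp [hWdef]
  have hW0' : t * W 0 = t ^ (2*h+1) := by
    simp only [hWdef]
    simp [pow_succ, mul_comm]
  have hkey : T y - t • y = ((s-1)*t) • Y₂ - ((s-1)*t/s) • Y₁ + z (2*h+1)
      - t ^ (2*h+1) • x := by
    rw [hydef, htele, hmid, hW2h, hW0', one_smul]
  -- decomposition of y
  have hdecomp : y = W 0 • z 0 + (Y₁ + Y₂) := by
    rw [hydef, Finset.sum_range_succ', Finset.range_eq_Ico,
      ← Finset.sum_Ico_consecutive _ (Nat.zero_le h) (by omega : h ≤ 2*h),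
      ← hY₁def, ← hY₂def]
    abel
  have hsub1 : y - Y₁ ∈ C := by
    have : y - Y₁ = W 0 • z 0 + Y₂ := by rw [hdecomp]; abel
    rw [this]
    exact hW.2 _ (hW.1 _ (hW0 0) _ (hz 0)) _ hY₂
  have hsub2 : y - Y₂ ∈ C := by
    have : y - Y₂ = W 0 • z 0 + Y₁ := by rw [hdecomp]; abel
    rw [this]
    exact hW.2 _ (hW.1 _ (hW0 0) _ (hz 0)) _ hY₁
  have hnY₁ : ‖Y₁‖ ≤ M * ‖y‖ := hM _ hY₁ _ hy hsub1
  have hnY₂ : ‖Y₂‖ ≤ M * ‖y‖ := hM _ hY₂ _ hy hsub2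
  -- single term bound
  have hterm : W h * ‖z h‖ ≤ M * ‖y‖ := by
    have hmem : h ∈ Finset.range (2*h+1) := Finset.mem_range.2 (by omega)
    have hsplit := Finset.add_sum_erase (Finset.range (2*h+1)) (fun j => W j • z j) hmem
    have hrest : y - W h • z h ∈ C := by
      have : y - W h • z h = ∑ j ∈ (Finset.range (2*h+1)).erase h, W j • z j := by
        rw [hydef, ← hsplit]; abel
      rw [this]
      exact sum_mem_cone hW h0 _ _ _ (fun i _ => hW0 i) (fun i _ => hz i)
    have := hM _ (hW.1 _ (hW0 h) _ (hz h)) _ hy hrest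
    rwa [norm_smul, Real.norm_eq_abs, abs_of_nonneg (hW0 h)] at this
  -- main estimate
  have hc4 : (s-1)*t = ε/(4*M) := by
    rw [hsdef]
    field_simp
    ring
  have hst0 : (0:ℝ) ≤ (s-1)*t := by nlinarith
  have hsts0 : (0:ℝ) ≤ (s-1)*t/s := div_nonneg hst0 hs0.le
  have hcs : (s-1)*t/s ≤ (s-1)*t := div_le_self hst0 hs1.le
  have hnormbound : ‖T y - t • y‖
      ≤ (s-1)*t*‖Y₂‖ + (s-1)*t/s*‖Y₁‖ + ‖z (2*h+1)‖ + t^(2*h+1) := by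
    rw [hkey]
    calc ‖((s-1)*t) • Y₂ - ((s-1)*t/s) • Y₁ + z (2*h+1) - t ^ (2*h+1) • x‖
        ≤ ‖((s-1)*t) • Y₂ - ((s-1)*t/s) • Y₁ + z (2*h+1)‖ + ‖t ^ (2*h+1) • x‖ :=
          norm_sub_le _ _
      _ ≤ ‖((s-1)*t) • Y₂ - ((s-1)*t/s) • Y₁‖ + ‖z (2*h+1)‖ + ‖t ^ (2*h+1) • x‖ := by
          have := norm_add_le (((s-1)*t) • Y₂ - ((s-1)*t/s) • Y₁) (z (2*h+1))
          linarith
      _ ≤ ‖((s-1)*t) • Y₂‖ + ‖((s-1)*t/s) • Y₁‖ + ‖z (2*h+1)‖ + ‖t ^ (2*h+1) • x‖ := by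
          have := norm_sub_le (((s-1)*t) • Y₂) (((s-1)*t/s) • Y₁)
          linarith
      _ ≤ (s-1)*t*‖Y₂‖ + (s-1)*t/s*‖Y₁‖ + ‖z (2*h+1)‖ + t^(2*h+1) := by
          rw [norm_smul, norm_smul, norm_smul, Real.norm_eq_abs, Real.norm_eq_abs,
            Real.norm_eq_abs, abs_of_nonneg hst0, abs_of_nonneg hsts0,
            abs_of_nonneg (by positivity : (0:ℝ) ≤ t^(2*h+1)), hx1, mul_one]
  have hA' := hA y hy
  have hzn : (0:ℝ) ≤ ‖z (2*h+1)‖ := norm_nonneg _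
  have hyn : (0:ℝ) ≤ ‖y‖ := norm_nonneg _
  have hbig' : t^(2*h+1) ≤ 2 * ‖z (2*h+1)‖ := by
    simp only [hzdef]
    linarith
  have hchain : ε * ‖y‖ ≤ (ε/2) * ‖y‖ + 3 * ‖z (2*h+1)‖ := by
    have h1 : (s-1)*t*‖Y₂‖ ≤ (ε/(4*M)) * (M * ‖y‖) := by
      rw [hc4]
      exact mul_le_mul_of_nonneg_left hnY₂ (by positivity)
    have h2 : (s-1)*t/s*‖Y₁‖ ≤ (ε/(4*M)) * (M * ‖y‖) := by
      have hb : (s-1)*t/s*‖Y₁‖ ≤ (s-1)*t*‖Y₁‖ :=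
        mul_le_mul_of_nonneg_right hcs (norm_nonneg _)
      refine le_trans hb ?_
      rw [hc4]
      exact mul_le_mul_of_nonneg_left hnY₁ (by positivity)
    have hlast : (ε/(4*M)) * (M * ‖y‖) = (ε/4) * ‖y‖ := by field_simp
    rw [hlast] at h1 h2
    calc ε * ‖y‖ ≤ ‖T y - t • y‖ := hA'
      _ ≤ (s-1)*t*‖Y₂‖ + (s-1)*t/s*‖Y₁‖ + ‖z (2*h+1)‖ + t^(2*h+1) := hnormbound
      _ ≤ (ε/4)*‖y‖ + (ε/4)*‖y‖ + ‖z (2*h+1)‖ + 2*‖z (2*h+1)‖ := by linarith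
      _ = (ε/2) * ‖y‖ + 3 * ‖z (2*h+1)‖ := by ring
  have hyb : ‖y‖ ≤ 6 / ε * ‖z (2*h+1)‖ := by
    rw [div_mul_eq_mul_div, le_div_iff₀ hε]
    nlinarith
  have hWh : W h = t ^ h * s ^ h := by
    simp only [hWdef]
    rw [show 2*h - h = h from by omega, min_self]
  calc t ^ h * s ^ h * ‖T^[h] x‖ = W h * ‖z h‖ := by rw [hWh]
    _ ≤ M * ‖y‖ := hterm
    _ ≤ M * (6 / ε * ‖z (2*h+1)‖) := mul_le_mul_of_nonneg_left hyb hM0.le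
    _ = (6*M/ε) * ‖T^[2*h+1] x‖ := by simp only [hzdef]; ring

end Aux6
section Aux7
variable [NormedAddCommGroup X] [NormedSpace ℝ X]
variable {C : Set X} {T : X → X}

set_option maxHeartbeats 1000000 in
lemma diamond_bound (hW : IsWedge C) (h0 : (0:X) ∈ C) (hT0 : T 0 = 0)
    (hTC : Set.MapsTo T C C) (hhom : PosHomOn C T) (hadd : AdditiveOn C T)
    {L : ℝ} (hL0 : 0 < L) (hL : ∀ x ∈ C, ∀ y ∈ C, ‖T x - T y‖ ≤ L * ‖x - y‖)
    {M : ℝ} (hM0 : 0 < M) (hM : ∀ x ∈ C, ∀ y ∈ C, y - x ∈ C → ‖x‖ ≤ M * ‖y‖)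
    {t ε : ℝ} (ht : 0 < t) (hε : 0 < ε)
    (hA : ∀ y ∈ C, ε * ‖y‖ ≤ ‖T y - t • y‖)
    {x : X} (hx : x ∈ C) (hlr : localRadius C T x ≤ t) (h : ℕ)
    (hah : 0 < ‖T^[h] x‖) :
    ‖T^[2*h+1] x‖ ≤ (4*M*t/ε) * (t * (1 + ε/(8*M*t))) ^ (h+1) * ‖T^[h] x‖ := by
  set s' : ℝ := 1 + ε/(8*M*t) with hs'def
  have hs'1 : 1 < s' := by
    rw [hs'def]; nlinarith [div_pos hε (by positivity : (0:ℝ) < 8*M*t)]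
  have hs'0 : (0:ℝ) < s' := by linarith
  clear_value s'
  have hts' : t < t * s' := by nlinarith
  have hts'0 : (0:ℝ) < t * s' := by positivity
  set ρ : ℝ := (t + t * s') / 2 with hρdef
  have hρ1 : t < ρ := by rw [hρdef]; linarith [hts']
  have hρ2 : ρ < t * s' := by rw [hρdef]; linarith
  have hρ0 : (0:ℝ) < ρ := lt_trans ht hρ1
  clear_value ρ
  set a : ℕ → ℝ := fun m => ‖T^[m] x‖ with hadef
  -- choose q
  have hq : ∃ q : ℕ, h + 2 ≤ q ∧ a (h+q+1) ≤ t * (t*s')^q * a h := by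
    have hev1 : ∀ᶠ m in Filter.atTop, a m ≤ ρ ^ m :=
      orbit_eventually_le hTC h0 hT0 hL0.le hL hx hlr hρ1
    obtain ⟨m₀, hm₀⟩ := Filter.eventually_atTop.1 hev1
    have hgeo : Filter.Tendsto (fun q : ℕ => (ρ/(t*s'))^q) Filter.atTop (nhds 0) :=
      tendsto_pow_atTop_nhds_zero_of_lt_one (by positivity)
        ((div_lt_one hts'0).2 hρ2)
    have hpos : (0:ℝ) < t * a h / ρ^(h+1) := by positivity
    have hev2 := hgeo.eventually_lt_const hpos
    obtain ⟨q, ⟨hq1, hq2⟩, hq3⟩ :=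
      ((hev2.and (Filter.eventually_ge_atTop (max m₀ (h+2)))).and
        (Filter.eventually_ge_atTop (h+2))).exists
    refine ⟨q, hq3, ?_⟩
    have hq2' : m₀ ≤ q := le_trans (le_max_left _ _) hq2
    have hqm₀ : h + q + 1 ≥ m₀ := by omega
    have h1 : a (h+q+1) ≤ ρ ^ (h+q+1) := hm₀ _ hqm₀
    have h2 : ρ ^ (h+q+1) ≤ t * (t*s')^q * a h := by
      have h3 : (ρ/(t*s'))^q < t * a h / ρ^(h+1) := hq1
      rw [div_pow, div_lt_div_iff₀ (by positivity) (by positivity)] at h3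
      have h4 : ρ ^ (h+q+1) = ρ^q * ρ^(h+1) := by
        rw [← pow_add]; congr 1; omega
      rw [h4]
      calc ρ^q * ρ^(h+1) ≤ t * a h * (t*s')^q := h3.le
        _ = t * (t*s')^q * a h := by ring
    exact le_trans h1 h2
  obtain ⟨q, hq2, hqle⟩ := hq
  -- weighted sum
  set x' : X := T^[h] x with hx'def
  have hx'C : x' ∈ C := iter_mem hTC h hx
  set w : ℕ → ℝ := fun k => (t*s') ^ (q - k) with hwdef
  have hw0 : ∀ k, 0 ≤ w k := fun k => by positivity
  set z : ℕ → X := fun k => T^[k] x' with hzdef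
  have hz : ∀ k, z k ∈ C := fun k => iter_mem hTC k hx'C
  set y : X := ∑ k ∈ Finset.range (q+1), w k • z k with hydef
  have hy : y ∈ C := sum_mem_cone hW h0 _ _ _ (fun i _ => hw0 i) (fun i _ => hz i)
  have htele := tele hW h0 hT0 hTC hhom hadd w hw0 t q hx'C
  set Y₃ : X := ∑ k ∈ Finset.range q, w (k+1) • z (k+1) with hY₃def
  have hY₃ : Y₃ ∈ C := sum_mem_cone hW h0 _ _ _ (fun i _ => hw0 _) (fun i _ => hz _)
  have hmid : ∑ k ∈ Finset.range q, (w k - t * w (k+1)) • z (k+1)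
      = ((s'-1)*t) • Y₃ := by
    rw [hY₃def, Finset.smul_sum]
    refine Finset.sum_congr rfl fun k hk => ?_
    have hkq : k < q := Finset.mem_range.1 hk
    have m1 : w k = (t*s') ^ ((q - (k+1)) + 1) := by
      simp only [hwdef]
      rw [show q - k = (q - (k+1)) + 1 from by omega]
    have m2 : w (k+1) = (t*s') ^ (q - (k+1)) := by simp only [hwdef]
    have hc : w k - t * w (k+1) = (s'-1)*t * w (k+1) := by
      rw [m1, m2]; ring
    rw [hc, smul_smul]
  have hwq : w q = 1 := by simp [hwdef]
  have hkey : T y - t • y = ((s'-1)*t) • Y₃ + z (q+1) - (t * (t*s')^q) • x' := by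
    rw [hydef, htele, hmid, hwq, one_smul]
    have : t * w 0 = t * (t*s')^q := by simp [hwdef]
    rw [this]
  have hdecomp : y = w 0 • z 0 + Y₃ := by
    rw [hydef, Finset.sum_range_succ', ← hY₃def]
    abel
  have hsub : y - Y₃ ∈ C := by
    have : y - Y₃ = w 0 • z 0 := by rw [hdecomp]; abel
    rw [this]
    exact hW.1 _ (hw0 0) _ (hz 0)
  have hnY₃ : ‖Y₃‖ ≤ M * ‖y‖ := hM _ hY₃ _ hy hsub
  have hc8 : (s'-1)*t = ε/(8*M) := by
    rw [hs'def]
    field_simp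
    ring
  have hst0 : (0:ℝ) ≤ (s'-1)*t := by nlinarith
  -- norm estimate for T y - t y
  have hzq1 : z (q+1) = T^[h+q+1] x := by
    simp only [hzdef, hx'def, ← Function.iterate_add_apply]
    rw [show q+1+h = h+q+1 from by omega]
  have hnormbound : ‖T y - t • y‖
      ≤ (s'-1)*t*(M*‖y‖) + a (h+q+1) + t * (t*s')^q * a h := by
    rw [hkey]
    calc ‖((s'-1)*t) • Y₃ + z (q+1) - (t * (t*s')^q) • x'‖
        ≤ ‖((s'-1)*t) • Y₃ + z (q+1)‖ + ‖(t * (t*s')^q) • x'‖ := norm_sub_le _ _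
      _ ≤ ‖((s'-1)*t) • Y₃‖ + ‖z (q+1)‖ + ‖(t * (t*s')^q) • x'‖ := by
          have := norm_add_le (((s'-1)*t) • Y₃) (z (q+1))
          linarith
      _ ≤ (s'-1)*t*(M*‖y‖) + a (h+q+1) + t * (t*s')^q * a h := by
          rw [norm_smul, norm_smul, Real.norm_eq_abs, Real.norm_eq_abs,
            abs_of_nonneg hst0, abs_of_nonneg (by positivity : (0:ℝ) ≤ t*(t*s')^q),
            hzq1]
          have h5 : ‖x'‖ = a h := by simp only [hx'def, hadef]
          have h6 : ‖T^[h+q+1] x‖ = a (h+q+1) := by simp only [hadef]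
          rw [h5, h6]
          have := mul_le_mul_of_nonneg_left hnY₃ hst0
          linarith
  have hA' := hA y hy
  have hyn : (0:ℝ) ≤ ‖y‖ := norm_nonneg _
  have hchain : (7*ε/8) * ‖y‖ ≤ 2 * (t * (t*s')^q * a h) := by
    have h7 : (s'-1)*t*(M*‖y‖) = (ε/8)*‖y‖ := by rw [hc8]; field_simp
    have h8 : ε * ‖y‖ ≤ (ε/8)*‖y‖ + a (h+q+1) + t*(t*s')^q * a h := by
      calc ε * ‖y‖ ≤ ‖T y - t • y‖ := hA'
        _ ≤ (s'-1)*t*(M*‖y‖) + a (h+q+1) + t * (t*s')^q * a h := hnormbound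
        _ = (ε/8)*‖y‖ + a (h+q+1) + t * (t*s')^q * a h := by rw [h7]
    linarith [hqle]
  have hyb : ‖y‖ ≤ 16/(7*ε) * (t*(t*s')^q * a h) := by
    rw [div_mul_eq_mul_div, le_div_iff₀ (by positivity)]
    nlinarith [hchain]
  -- single term
  have hmem : h+1 ∈ Finset.range (q+1) := Finset.mem_range.2 (by omega)
  have hrest : y - w (h+1) • z (h+1) ∈ C := by
    have hsplit := Finset.add_sum_erase (Finset.range (q+1)) (fun k => w k • z k) hmem
    have : y - w (h+1) • z (h+1)
        = ∑ k ∈ (Finset.range (q+1)).erase (h+1), w k • z k := by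
      rw [hydef, ← hsplit]; abel
    rw [this]
    exact sum_mem_cone hW h0 _ _ _ (fun i _ => hw0 i) (fun i _ => hz i)
  have hterm : w (h+1) * ‖z (h+1)‖ ≤ M * ‖y‖ := by
    have := hM _ (hW.1 _ (hw0 (h+1)) _ (hz (h+1))) _ hy hrest
    rwa [norm_smul, Real.norm_eq_abs, abs_of_nonneg (hw0 (h+1))] at this
  have hz2h : z (h+1) = T^[2*h+1] x := by
    simp only [hzdef, hx'def, ← Function.iterate_add_apply]
    rw [show h+1+h = 2*h+1 from by omega]
  have hwh1 : w (h+1) = (t*s') ^ (q-(h+1)) := by simp only [hwdef]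
  have hpowsplit : (t*s')^q = (t*s')^(q-(h+1)) * (t*s')^(h+1) := by
    rw [← pow_add]; congr 1; omega
  have hstep : (t*s')^(q-(h+1)) * ‖T^[2*h+1] x‖
      ≤ (t*s')^(q-(h+1)) * ((16*M*t/(7*ε)) * (t*s')^(h+1) * a h) := by
    calc (t*s')^(q-(h+1)) * ‖T^[2*h+1] x‖ = w (h+1) * ‖z (h+1)‖ := by
          rw [hwh1, hz2h]
      _ ≤ M * ‖y‖ := hterm
      _ ≤ M * (16/(7*ε) * (t*(t*s')^q * a h)) :=
          mul_le_mul_of_nonneg_left hyb hM0.le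
      _ = (t*s')^(q-(h+1)) * ((16*M*t/(7*ε)) * (t*s')^(h+1) * a h) := by
          rw [hpowsplit]; ring
  have hpow0 : (0:ℝ) < (t*s')^(q-(h+1)) := by positivity
  have hstep2 : ‖T^[2*h+1] x‖ ≤ (16*M*t/(7*ε)) * (t*s')^(h+1) * a h :=
    le_of_mul_le_mul_left hstep hpow0
  have hcoef : (16*M*t/(7*ε)) ≤ 4*M*t/ε := by
    rw [div_le_div_iff₀ (by positivity) (by positivity)]
    nlinarith [mul_pos (mul_pos hM0 ht) hε]
  calc ‖T^[2*h+1] x‖ ≤ (16*M*t/(7*ε)) * (t*s')^(h+1) * a h := hstep2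
    _ ≤ (4*M*t/ε) * (t*s')^(h+1) * a h := by
        have h9 : (0:ℝ) ≤ (t*s')^(h+1) * a h := by positivity
        calc (16*M*t/(7*ε)) * (t*s')^(h+1) * a h
            = (16*M*t/(7*ε)) * ((t*s')^(h+1) * a h) := by ring
          _ ≤ (4*M*t/ε) * ((t*s')^(h+1) * a h) := mul_le_mul_of_nonneg_right hcoef h9
          _ = (4*M*t/ε) * (t*s')^(h+1) * a h := by ring

end Aux7
section Aux8
variable [NormedAddCommGroup X] [NormedSpace ℝ X]
variable {C : Set X} {T : X → X}

lemma mem_apSpectrum_aux (hC : IsNormalWedge C) {x₀ : X} (hx₀C : x₀ ∈ C) (hx₀ : x₀ ≠ 0)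
    (hTC : Set.MapsTo T C C) (hhom : PosHomOn C T) (hadd : AdditiveOn C T)
    (hlip : LipschitzOnCone C T) {t : ℝ}
    (ht1 : ∀ x ∈ C, localRadius C T x ≤ t) (ht2 : t ≤ coneRadius C T) :
    t ∈ apSpectrum C T := by
  obtain ⟨hW, M, hM0, hM⟩ := hC
  obtain ⟨L, hL0, hL⟩ := hlip
  have h0C : (0:X) ∈ C := by
    have := hW.1 0 le_rfl x₀ hx₀C
    simpa using this
  have hT0 : T 0 = 0 := by
    have := hhom 0 le_rfl x₀ hx₀C
    simpa using this
  have hBiter : ∀ m : ℕ, ∀ x ∈ C, ‖T^[m] x‖ ≤ L ^ m * ‖x‖ :=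
    fun m x hx => iter_norm_le hTC h0C hT0 hL0.le hL m hx
  have ht0 : 0 ≤ t :=
    le_trans (localRadius_nonneg_s12 hTC h0C hT0 hL0.le hL hx₀C) (ht1 x₀ hx₀C)
  refine ⟨ht0, ?_⟩
  by_contra hcon
  push_neg at hcon
  obtain ⟨ε, hε, hcon⟩ := hcon
  have hA : ∀ y ∈ C, ε * ‖y‖ ≤ ‖T y - t • y‖ := by
    intro y hy
    rcases eq_or_ne y 0 with rfl | hyne
    · simp [hT0]
    · have hyn : (0:ℝ) < ‖y‖ := norm_pos_iff.2 hyne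
      have hinv : (0:ℝ) ≤ ‖y‖⁻¹ := by positivity
      have hu : ‖y‖⁻¹ • y ∈ C := hW.1 _ hinv _ hy
      have hu1 : ‖‖y‖⁻¹ • y‖ = 1 := by
        rw [norm_smul, norm_inv, norm_norm, inv_mul_cancel₀ hyn.ne']
      have h1 := hcon _ hu hu1
      rw [hhom _ hinv _ hy] at h1
      have heq : ‖‖y‖⁻¹ • T y - t • ‖y‖⁻¹ • y‖ = ‖y‖⁻¹ * ‖T y - t • y‖ := by
        rw [smul_comm t (‖y‖⁻¹) y, ← smul_sub, norm_smul, norm_inv, norm_norm]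
      rw [heq] at h1
      have h2 := mul_le_mul_of_nonneg_right h1 hyn.le
      have h3 : ‖y‖⁻¹ * ‖T y - t • y‖ * ‖y‖ = ‖T y - t • y‖ := by
        field_simp
      rwa [h3] at h2
  rcases ht0.eq_or_lt with heq | htpos
  · -- t = 0
    have hlow : ∀ y ∈ C, ε * ‖y‖ ≤ ‖T y‖ := fun y hy => by
      simpa [← heq] using hA y hy
    have hup := le_localRadius hTC h0C hT0 hL0.le hL hx₀C hx₀ hε hlow
      (half_lt_self hε)
    have hdn := ht1 x₀ hx₀C
    rw [← heq] at hdn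
    linarith
  · -- t > 0
    set s : ℝ := 1 + ε/(4*M*t) with hsdef
    set s' : ℝ := 1 + ε/(8*M*t) with hs'def
    have hs'1 : 1 < s' := by
      rw [hs'def]; nlinarith [div_pos hε (by positivity : (0:ℝ) < 8*M*t)]
    have hss' : s' < s := by
      rw [hsdef, hs'def]
      have : ε/(8*M*t) < ε/(4*M*t) := by
        apply div_lt_div_of_pos_left hε (by positivity)
        nlinarith
      linarith
    have hs1 : 1 < s := lt_trans hs'1 hss'
    have hs0 : (0:ℝ) < s := by linarith
    have hs'0 : (0:ℝ) < s' := by linarith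
    set K : ℝ := 24*M^2*t^2*s'/ε^2 with hKdef
    obtain ⟨h, hh⟩ := pow_unbounded_of_one_lt K ((one_lt_div hs'0).2 hss')
    have hcoNe : t^(2*h+1) ≤ coneNorm C (T^[2*h+1]) :=
      pow_le_coneNorm_iter ht0 ht2 hBiter hx₀C hx₀ (2*h)
    have hb : t^(2*h+1)/2 < coneNorm C (T^[2*h+1]) :=
      lt_of_lt_of_le (half_lt_self (by positivity)) hcoNe
    obtain ⟨x, hx, hx1, hbig⟩ := exists_unit_witness hW.1 (T^[2*h+1])
      (fun c hc z hz => iter_hom hTC hhom _ hc hz) (hBiter (2*h+1)) hx₀C hx₀ hb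
    have hsplit : T^[2*h+1] x = T^[h+1] (T^[h] x) := by
      rw [← Function.iterate_add_apply, show h+1+h = 2*h+1 from by omega]
    have h1 : ‖T^[2*h+1] x‖ ≤ L^(h+1) * ‖T^[h] x‖ := by
      rw [hsplit]
      exact iter_norm_le hTC h0C hT0 hL0.le hL (h+1) (iter_mem hTC h hx)
    have hah : 0 < ‖T^[h] x‖ := by
      by_contra hc'
      push_neg at hc'
      nlinarith [pow_pos htpos (2*h+1), pow_pos hL0 (h+1), norm_nonneg (T^[h] x)]
    have htent := tent_bound hW h0C hT0 hTC hhom hadd hM0 hM htpos hε hA hx hx1 h hbig.le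
    have hdia := diamond_bound hW h0C hT0 hTC hhom hadd hL0 hL hM0 hM htpos hε hA hx
      (ht1 x hx) h hah
    rw [← hsdef] at htent
    rw [← hs'def] at hdia
    have hcomb : t^h * s^h * ‖T^[h] x‖
        ≤ (6*M/ε) * ((4*M*t/ε) * (t*s')^(h+1) * ‖T^[h] x‖) :=
      htent.trans (mul_le_mul_of_nonneg_left hdia (by positivity))
    have hexp : (6*M/ε) * ((4*M*t/ε) * (t*s')^(h+1) * ‖T^[h] x‖)
        = K * (t^h * s'^h * ‖T^[h] x‖) := by
      have hps : (t*s')^(h+1) = t^h * s'^h * (t*s') := by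
        rw [pow_succ, mul_pow]
      rw [hps, hKdef]
      field_simp
      ring
    rw [hexp] at hcomb
    have hsh : s^h ≤ K * s'^h := by
      have hpos : (0:ℝ) < t^h * ‖T^[h] x‖ := by positivity
      refine le_of_mul_le_mul_right ?_ hpos
      calc s^h * (t^h * ‖T^[h] x‖) = t^h * s^h * ‖T^[h] x‖ := by ring
        _ ≤ K * (t^h * s'^h * ‖T^[h] x‖) := hcomb
        _ = K * s'^h * (t^h * ‖T^[h] x‖) := by ring
    have hfin : (s/s')^h ≤ K := by
      rw [div_pow, div_le_iff₀ (by positivity)]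
      linarith [hsh]
    linarith
end Aux8
/-- **Theorem 4.1.** Let `X` be a normed space, `C ⊆ X` a non-zero normal wedge, and
`T : C → C` positively homogeneous, additive and Lipschitz. If
`sup {r_x(T) : x ∈ C} ≤ t ≤ r(T)`, then `t ∈ σ_ap(T)`. In particular
`r(T) ∈ σ_ap(T)`; moreover `r(T) = max {t : t ∈ σ_ap(T)}`. -/
theorem mem_apSpectrum_of_between_wedge [NormedAddCommGroup X] [NormedSpace ℝ X]
    (C : Set X) (hC : IsNormalWedge C) (hCne : ∃ x ∈ C, x ≠ 0)
    (T : X → X) (hTC : Set.MapsTo T C C)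
    (hhom : PosHomOn C T) (hadd : AdditiveOn C T) (hlip : LipschitzOnCone C T)
    (t : ℝ) (ht1 : ∀ x ∈ C, localRadius C T x ≤ t) (ht2 : t ≤ coneRadius C T) :
    t ∈ apSpectrum C T ∧ coneRadius C T ∈ apSpectrum C T ∧
      ∀ s ∈ apSpectrum C T, s ≤ coneRadius C T := by
  obtain ⟨x₀, hx₀C, hx₀⟩ := hCne
  have part1 := mem_apSpectrum_aux hC hx₀C hx₀ hTC hhom hadd hlip ht1 ht2
  have part2 := mem_apSpectrum_aux hC hx₀C hx₀ hTC hhom hadd hlip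
    (fun x hx => (ht1 x hx).trans ht2) le_rfl
  obtain ⟨hW, M, hM0, hM⟩ := hC
  obtain ⟨L, hL0, hL⟩ := hlip
  have h0C : (0:X) ∈ C := by
    have := hW.1 0 le_rfl x₀ hx₀C
    simpa using this
  have hT0 : T 0 = 0 := by
    have := hhom 0 le_rfl x₀ hx₀C
    simpa using this
  exact ⟨part1, part2, fun s hs =>
    apSpectrum_le_coneRadius hTC hW.1 h0C hT0 hhom hL0 hL hx₀C hx₀ hs⟩
end

section
/- Let A = [a(i,j)]_{i,j ∈ ℕ} be an infinite non-negative matrix which is bounded, i.e., a(i,j) ≥ 0 for all i, j and sup_{i,j} a(i,j) < ∞, and let T_A be the max-kernel operator on the positive cone C = l∞₊ defined by (T_A x)(i) = sup_{j ∈ ℕ} a(i,j)x(j). If t is a real number with sup{r_{e_j}(T_A) : j ∈ ℕ} ≤ t ≤ r(T_A), then t ∈ σ_ap(T_A). -/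
/-!
Fix `s > t`. Since `r_{e_j}(T) ≤ t`, every column orbit `Tⁿ e_j` is `O(sⁿ)`. Since `r(T) ≥ t`,
some `x ≥ 0` has `‖T^N x‖ > (t^N / 2) ‖x‖`, and unwinding the suprema gives a path
`l₀ → ⋯ → l_N` whose edge weights multiply to more than `t^N / 2`. With `ρ` slightly below `t`
and weights `w_k = ρ^k / ∏_{m<k} a(l_m, l_{m+1})`, the seed `u₀ = max_{k ≤ N} w_k e_{l_k}`
satisfies `s u₀ ≤ T u₀ + η` with `η` small relative to `‖u₀‖` (the endpoint costs `s w_N`,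
which is small for `N` large). As `T` commutes with finite maxima, `Tⁿ u₀` is still `O(sⁿ)`, so
`u = supₙ s⁻ⁿ Tⁿ u₀` lies in `ℓ∞`; it satisfies `T u ≤ s u ≤ max (s u₀, T u)`, whence
`‖T u - s u‖ ≤ η ≤ (small) ‖u‖`. Normalizing `u` and letting `s ↓ t` shows `t ∈ σ_ap(T)`.
When `t = 0` the trivial path `N = 0`, i.e. `u₀ = e_0`, already works.
-/

open Filter Topology Bornology Pointwise

variable {X : Type*}

open Finset

local notation "ℓ∞" => lp (fun _ : ℕ => ℝ) ⊤

section Cone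

variable [NormedAddCommGroup X] {C : Set X} {T : X → X}

theorem exists_lt_norm_iterate_of_le_coneRadius (hC : ∃ x ∈ C, x ≠ 0) {t c : ℝ} (ht : 0 ≤ t)
    (htr : t ≤ coneRadius C T) (n : ℕ) (hc : c < t ^ (n + 1)) :
    ∃ x ∈ C, x ≠ 0 ∧ c * ‖x‖ < ‖T^[n + 1] x‖ := by
  have hnorm : ∀ m : ℕ, 0 ≤ coneNorm C (T^[m]) := fun m =>
    Real.sSup_nonneg <| by rintro _ ⟨x, -, -, rfl⟩; positivity
  have hroot : t ≤ coneNorm C (T^[n + 1]) ^ ((n + 1 : ℕ) : ℝ)⁻¹ := by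
    have hbdd : BddBelow (Set.range fun m : ℕ => coneNorm C (T^[m + 1]) ^ ((1 : ℝ) / (m + 1))) :=
      ⟨0, by rintro _ ⟨m, rfl⟩; exact Real.rpow_nonneg (hnorm _) _⟩
    refine htr.trans ((ciInf_le hbdd n).trans_eq ?_)
    congr 1
    push_cast
    ring
  have hpow : t ^ (n + 1) ≤ coneNorm C (T^[n + 1]) := by
    have := pow_le_pow_left₀ ht hroot (n + 1)
    rwa [Real.rpow_inv_natCast_pow (hnorm _) n.succ_ne_zero] at this
  obtain ⟨x, hxC, hx0⟩ := hC
  have hsup : c < sSup {r | ∃ x ∈ C, x ≠ 0 ∧ r = ‖T^[n + 1] x‖ / ‖x‖} := hc.trans_le hpow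
  obtain ⟨_, ⟨y, hyC, hy0, rfl⟩, hy⟩ :=
    exists_lt_of_lt_csSup (by exact ⟨_, x, hxC, hx0, rfl⟩) hsup
  exact ⟨y, hyC, hy0, (lt_div_iff₀ (norm_pos_iff.2 hy0)).1 hy⟩

variable [NormedSpace ℝ X]

theorem mem_apSpectrum_of_forall_exists_norm_sub_smul_le (hC : IsCone C) (hT : PosHomOn C T)
    {t : ℝ} (ht : 0 ≤ t) (h : ∀ ε > 0, ∃ u ∈ C, u ≠ 0 ∧ ‖T u - t • u‖ ≤ ε * ‖u‖) :
    t ∈ apSpectrum C T := by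
  refine ⟨ht, fun ε hε => ?_⟩
  obtain ⟨u, huC, hu0, hu⟩ := h (ε / 2) (half_pos hε)
  have hu : 0 < ‖u‖ := norm_pos_iff.2 hu0
  refine ⟨‖u‖⁻¹ • u, hC _ (inv_nonneg.2 hu.le) u huC, ?_, ?_⟩
  · rw [norm_smul, norm_inv, norm_norm, inv_mul_cancel₀ hu.ne']
  · rw [hT _ (inv_nonneg.2 hu.le) u huC, smul_comm t, ← smul_sub, norm_smul, norm_inv, norm_norm]
    calc ‖u‖⁻¹ * ‖T u - t • u‖ ≤ ‖u‖⁻¹ * (ε / 2 * ‖u‖) := by gcongr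
      _ = ε / 2 := by field_simp
      _ < ε := half_lt_self hε

end Cone

theorem exists_le_mul_pow_of_limsup_rpow_lt {c : ℕ → ℝ} {s : ℝ} (hc : ∀ n, 0 ≤ c n)
    (hbdd : IsBoundedUnder (· ≤ ·) atTop fun n => c n ^ ((1 : ℝ) / n))
    (hlim : limsup (fun n => c n ^ ((1 : ℝ) / n)) atTop < s) :
    ∃ B, ∀ n, c n ≤ B * s ^ n := by
  obtain ⟨N, hN⟩ := eventually_atTop.1 (eventually_lt_of_limsup_lt hlim hbdd)
  have hs : 0 < s := (Real.rpow_nonneg (hc N) _).trans_lt (hN N le_rfl)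
  have hterm : ∀ m, 0 ≤ c m / s ^ m := fun m => div_nonneg (hc m) (pow_nonneg hs.le m)
  set B := 1 + ∑ m ∈ range (N + 1), c m / s ^ m
  have hB : 1 ≤ B := le_add_of_nonneg_right (sum_nonneg fun m _ => hterm m)
  refine ⟨B, fun n => ?_⟩
  rcases le_or_gt n N with hn | hn
  · have : c n / s ^ n ≤ B :=
      (single_le_sum (fun m _ => hterm m) (mem_range.2 (Nat.lt_succ_of_le hn))).trans
        (le_add_of_nonneg_left zero_le_one)
    calc c n = c n / s ^ n * s ^ n := by field_simp
      _ ≤ B * s ^ n := by gcongr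
  · have hn0 : (0 : ℝ) < n := by exact_mod_cast (Nat.zero_le N).trans_lt hn
    have := hN n hn.le
    rw [one_div, Real.rpow_inv_lt_iff_of_pos (hc n) hs.le hn0, Real.rpow_natCast] at this
    exact this.le.trans (le_mul_of_one_le_left (by positivity) hB)

namespace lp

theorem apply_le_norm (x : ℓ∞) (i : ℕ) : x i ≤ ‖x‖ :=
  (Real.le_norm_self _).trans (lp.norm_apply_le_norm ENNReal.top_ne_zero x i)

theorem norm_le_norm_of_nonneg_of_le {x y : ℓ∞} (hx : ∀ i, 0 ≤ x i) (hxy : ∀ i, x i ≤ y i) :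
    ‖x‖ ≤ ‖y‖ :=
  lp.norm_le_of_forall_le (norm_nonneg y) fun i => by
    rw [Real.norm_eq_abs, abs_of_nonneg (hx i)]
    exact (hxy i).trans (apply_le_norm y i)

theorem single_one_nonneg (j i : ℕ) : 0 ≤ (lp.single ⊤ j 1 : ℓ∞) i := by
  rw [lp.single_apply, Pi.single_apply]
  split_ifs <;> norm_num

theorem norm_single_one (j : ℕ) : ‖(lp.single ⊤ j 1 : ℓ∞)‖ = 1 := by
  rw [lp.norm_single (by simp), norm_one]

end lp

theorem isCone_nonneg : IsCone {x : ℓ∞ | ∀ i, 0 ≤ x i} := fun t ht x hx i => by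
  simpa using mul_nonneg ht (hx i)

section FiniteSup

variable {ι : Type*} (s : Finset ι) (hs : s.Nonempty) (y : ι → ℓ∞)

theorem memℓp_sup' : Memℓp (fun i => s.sup' hs fun k => y k i) ⊤ := by
  refine memℓp_infty ⟨s.sup' hs fun k => ‖y k‖, ?_⟩
  rintro _ ⟨i, rfl⟩
  obtain ⟨k, hk⟩ := id hs
  dsimp only
  rw [Real.norm_eq_abs, abs_le]
  constructor
  · calc -s.sup' hs (fun k => ‖y k‖) ≤ -‖y k‖ := neg_le_neg (le_sup' (fun k => ‖y k‖) hk)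
      _ ≤ y k i := neg_le_of_abs_le (lp.norm_apply_le_norm ENNReal.top_ne_zero (y k) i)
      _ ≤ _ := le_sup' (fun k => y k i) hk
  · exact sup'_le _ _ fun m hm => (lp.apply_le_norm (y m) i).trans (le_sup' (fun k => ‖y k‖) hm)

noncomputable def lpSup' : ℓ∞ :=
  ⟨fun i => s.sup' hs fun k => y k i, memℓp_sup' s hs y⟩

theorem lpSup'_apply (i : ℕ) : lpSup' s hs y i = s.sup' hs fun k => y k i :=
  rfl

end FiniteSup

noncomputable def orbitSup (T : ℓ∞ → ℓ∞) (s : ℝ) (x : ℓ∞) (i : ℕ) : ℝ :=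
  ⨆ n : ℕ, T^[n] x i / s ^ n

section OrbitSup

variable {T : ℓ∞ → ℓ∞} {s K : ℝ} {x : ℓ∞} (hs : 0 < s) (hK : ∀ n i, T^[n] x i ≤ K * s ^ n)
include hs hK

theorem div_pow_le_orbitSup (n i : ℕ) : T^[n] x i / s ^ n ≤ orbitSup T s x i :=
  le_ciSup (f := fun n => T^[n] x i / s ^ n)
    ⟨K, by rintro _ ⟨m, rfl⟩; exact (div_le_iff₀ (by positivity)).2 (hK m i)⟩ n

theorem le_orbitSup (i : ℕ) : x i ≤ orbitSup T s x i := by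
  simpa using div_pow_le_orbitSup hs hK 0 i

theorem orbitSup_le (i : ℕ) : orbitSup T s x i ≤ K :=
  ciSup_le fun n => (div_le_iff₀ (by positivity)).2 (hK n i)

theorem memℓp_orbitSup (hx : ∀ i, 0 ≤ x i) : Memℓp (orbitSup T s x) ⊤ := by
  refine memℓp_infty ⟨K, ?_⟩
  rintro _ ⟨i, rfl⟩
  dsimp only
  rw [Real.norm_eq_abs, abs_of_nonneg ((hx i).trans (le_orbitSup hs hK i))]
  exact orbitSup_le hs hK i

end OrbitSup

def pathProd (a : ℕ → ℕ → ℝ) (l : ℕ → ℕ) (k : ℕ) : ℝ :=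
  ∏ m ∈ range k, a (l m) (l (m + 1))

noncomputable def pathWeight (a : ℕ → ℕ → ℝ) (ρ : ℝ) (l : ℕ → ℕ) (k : ℕ) : ℝ :=
  ρ ^ k / pathProd a l k

/-- The weights `w_{k+1} = ρ w_k / a(l k, l (k+1))` make `(T u₀)(l k) ≥ ρ u₀(l k)`, for the
max-kernel operator `T` of `a`, at every vertex of the path except its endpoint. -/
noncomputable def pathSeed (a : ℕ → ℕ → ℝ) (ρ : ℝ) (l : ℕ → ℕ) (N : ℕ) : ℓ∞ :=
  lpSup' (range (N + 1)) nonempty_range_add_one fun k => pathWeight a ρ l k • lp.single ⊤ (l k) 1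

section Path

variable {a : ℕ → ℕ → ℝ} {ρ : ℝ} {l : ℕ → ℕ} {N : ℕ}

theorem pathWeight_zero : pathWeight a ρ l 0 = 1 := by
  simp [pathWeight, pathProd]

theorem pathWeight_nonneg (ha : ∀ i j, 0 ≤ a i j) (hρ : 0 ≤ ρ) (k : ℕ) :
    0 ≤ pathWeight a ρ l k :=
  div_nonneg (pow_nonneg hρ k) (prod_nonneg fun _ _ => ha _ _)

theorem mul_pathWeight_succ {k : ℕ} (h : a (l k) (l (k + 1)) ≠ 0) :
    a (l k) (l (k + 1)) * pathWeight a ρ l (k + 1) = ρ * pathWeight a ρ l k := by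
  rw [pathWeight, pathWeight, pathProd, prod_range_succ, ← pathProd, pow_succ,
    div_mul_eq_div_div, mul_div_cancel₀ _ h]
  ring

theorem pathSeed_apply (i : ℕ) : pathSeed a ρ l N i =
    (range (N + 1)).sup' nonempty_range_add_one
      fun k => pathWeight a ρ l k * (lp.single ⊤ (l k) 1 : ℓ∞) i :=
  rfl

theorem pathWeight_le_pathSeed {k : ℕ} (hk : k ≤ N) :
    pathWeight a ρ l k ≤ pathSeed a ρ l N (l k) := by
  rw [pathSeed_apply]
  refine le_of_eq_of_le ?_
    (le_sup' (fun m => pathWeight a ρ l m * (lp.single ⊤ (l m) 1 : ℓ∞) (l k))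
      (mem_range_succ_iff.2 hk))
  simp

theorem pathSeed_nonneg (ha : ∀ i j, 0 ≤ a i j) (hρ : 0 ≤ ρ) (i : ℕ) : 0 ≤ pathSeed a ρ l N i :=
  (mul_nonneg (pathWeight_nonneg ha hρ 0) (lp.single_one_nonneg (l 0) i)).trans
    (le_sup' (fun k => pathWeight a ρ l k * (lp.single ⊤ (l k) 1 : ℓ∞) i) (mem_range.2 N.succ_pos))

theorem one_le_norm_pathSeed : 1 ≤ ‖pathSeed a ρ l N‖ := by
  simpa [pathWeight_zero] using
    (pathWeight_le_pathSeed (a := a) (ρ := ρ) (l := l) N.zero_le).trans (lp.apply_le_norm _ _)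

end Path

structure IsMaxKernelOp (a : ℕ → ℕ → ℝ) (T : ℓ∞ → ℓ∞) : Prop where
  nonneg : ∀ i j, 0 ≤ a i j
  bdd : ∃ M, ∀ i j, a i j ≤ M
  apply_eq : ∀ x i, T x i = ⨆ j, a i j * x j

namespace IsMaxKernelOp

variable {a : ℕ → ℕ → ℝ} {T : ℓ∞ → ℓ∞} (hA : IsMaxKernelOp a T)
include hA

theorem exists_abs_mul_le : ∃ M, 0 ≤ M ∧ ∀ (x : ℓ∞) i j, |a i j * x j| ≤ M * ‖x‖ := by
  obtain ⟨M, hM⟩ := hA.bdd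
  have hM0 : 0 ≤ M := (hA.nonneg 0 0).trans (hM 0 0)
  refine ⟨M, hM0, fun x i j => ?_⟩
  rw [abs_mul, abs_of_nonneg (hA.nonneg i j), ← Real.norm_eq_abs]
  exact mul_le_mul (hM i j) (lp.norm_apply_le_norm ENNReal.top_ne_zero x j) (norm_nonneg _) hM0

theorem bddAbove_range (x : ℓ∞) (i : ℕ) : BddAbove (Set.range fun j => a i j * x j) := by
  obtain ⟨M, -, hM⟩ := hA.exists_abs_mul_le
  exact ⟨M * ‖x‖, by rintro _ ⟨j, rfl⟩; exact (le_abs_self _).trans (hM x i j)⟩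

theorem mul_le_apply (x : ℓ∞) (i j : ℕ) : a i j * x j ≤ T x i :=
  hA.apply_eq x i ▸ le_ciSup (hA.bddAbove_range x i) j

theorem apply_le {x : ℓ∞} {i : ℕ} {c : ℝ} (h : ∀ j, a i j * x j ≤ c) : T x i ≤ c :=
  hA.apply_eq x i ▸ ciSup_le h

theorem apply_nonneg {x : ℓ∞} (hx : ∀ j, 0 ≤ x j) (i : ℕ) : 0 ≤ T x i :=
  (mul_nonneg (hA.nonneg i 0) (hx 0)).trans (hA.mul_le_apply x i 0)

theorem apply_mono {x y : ℓ∞} (h : ∀ j, x j ≤ y j) (i : ℕ) : T x i ≤ T y i :=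
  hA.apply_le fun j => (mul_le_mul_of_nonneg_left (h j) (hA.nonneg i j)).trans
    (hA.mul_le_apply y i j)

theorem map_smul {c : ℝ} (hc : 0 ≤ c) (x : ℓ∞) : T (c • x) = c • T x :=
  lp.ext <| funext fun i => by
    simp [hA.apply_eq, Real.mul_iSup_of_nonneg hc, mul_left_comm]

theorem posHomOn : PosHomOn {x : ℓ∞ | ∀ i, 0 ≤ x i} T := fun _ hc x _ => hA.map_smul hc x

theorem iterate_smul {c : ℝ} (hc : 0 ≤ c) (n : ℕ) (x : ℓ∞) : T^[n] (c • x) = c • T^[n] x :=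
  (Function.Semiconj.iterate_right (f := (c • ·)) (fun y => (hA.map_smul hc y).symm) n x).symm

theorem iterate_nonneg {x : ℓ∞} (hx : ∀ j, 0 ≤ x j) (n : ℕ) : ∀ i, 0 ≤ T^[n] x i := by
  induction n with
  | zero => exact hx
  | succ n ih => rw [Function.iterate_succ_apply']; exact hA.apply_nonneg ih

theorem exists_norm_apply_le : ∃ M, 0 ≤ M ∧ ∀ x, ‖T x‖ ≤ M * ‖x‖ := by
  obtain ⟨M, hM0, hM⟩ := hA.exists_abs_mul_le
  refine ⟨M, hM0, fun x => lp.norm_le_of_forall_le (by positivity) fun i => ?_⟩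
  rw [Real.norm_eq_abs, abs_le]
  exact ⟨(neg_le_of_abs_le (hM x i 0)).trans (hA.mul_le_apply x i 0),
    hA.apply_le fun j => (le_abs_self _).trans (hM x i j)⟩

theorem isBoundedUnder_rpow_norm_iterate {x : ℓ∞} (hx : ‖x‖ ≤ 1) :
    IsBoundedUnder (· ≤ ·) atTop fun n => ‖T^[n] x‖ ^ ((1 : ℝ) / n) := by
  obtain ⟨M, hM0, hM⟩ := hA.exists_norm_apply_le
  have hpow : ∀ n, ‖T^[n] x‖ ≤ M ^ n := by
    intro n
    induction n with
    | zero => simpa using hx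
    | succ n ih =>
      rw [Function.iterate_succ_apply', pow_succ']
      exact (hM _).trans (mul_le_mul_of_nonneg_left ih hM0)
  refine isBoundedUnder_of_eventually_le (a := M) (eventually_atTop.2 ⟨1, fun n hn => ?_⟩)
  calc ‖T^[n] x‖ ^ ((1 : ℝ) / n) ≤ (M ^ n) ^ ((1 : ℝ) / n) :=
        Real.rpow_le_rpow (norm_nonneg _) (hpow n) (by positivity)
    _ = M := by rw [one_div, Real.pow_rpow_inv_natCast hM0 (by omega)]

theorem apply_lpSup'_le {ι : Type*} {s : Finset ι} (hs : s.Nonempty) (y : ι → ℓ∞) (i : ℕ) :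
    T (lpSup' s hs y) i ≤ s.sup' hs fun k => T (y k) i :=
  hA.apply_le fun j => by
    obtain ⟨k, hk, hkj⟩ := exists_mem_eq_sup' hs fun k => y k j
    rw [lpSup'_apply, hkj]
    exact (hA.mul_le_apply (y k) i j).trans (le_sup' (fun k => T (y k) i) hk)

theorem iterate_lpSup'_le {ι : Type*} {s : Finset ι} (hs : s.Nonempty) (y : ι → ℓ∞) (n : ℕ) :
    ∀ i, T^[n] (lpSup' s hs y) i ≤ s.sup' hs fun k => T^[n] (y k) i := by
  induction n with
  | zero => exact fun i => le_rfl
  | succ n ih =>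
    intro i
    simp only [Function.iterate_succ_apply']
    exact (hA.apply_mono (y := lpSup' s hs fun k => T^[n] (y k)) ih i).trans
      (hA.apply_lpSup'_le hs _ i)

section OrbitSup

variable {s K : ℝ} {x u : ℓ∞} (hs : 0 < s) (hK : ∀ n i, T^[n] x i ≤ K * s ^ n)
  (hu : ⇑u = orbitSup T s x)
include hs hK hu

theorem apply_le_mul_orbitSup (i : ℕ) : T u i ≤ s * u i :=
  hA.apply_le fun j => by
    rw [hu, orbitSup, Real.mul_iSup_of_nonneg (hA.nonneg i j)]
    refine ciSup_le fun n => ?_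
    calc a i j * (T^[n] x j / s ^ n) ≤ T^[n + 1] x i / s ^ n := by
          rw [mul_div_assoc', Function.iterate_succ_apply']
          gcongr
          exact hA.mul_le_apply _ i j
      _ = s * (T^[n + 1] x i / s ^ (n + 1)) := by field_simp; ring
      _ ≤ s * orbitSup T s x i := by gcongr; exact div_pow_le_orbitSup hs hK (n + 1) i

theorem mul_orbitSup_le_max (i : ℕ) : s * u i ≤ max (s * x i) (T u i) := by
  have hTu : ∀ n, T^[n + 1] x i ≤ s ^ n * T u i := fun n => by
    rw [Function.iterate_succ_apply', ← smul_eq_mul, ← Pi.smul_apply, ← lp.coeFn_smul,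
      ← hA.map_smul (by positivity)]
    refine hA.apply_mono (fun j => ?_) i
    rw [lp.coeFn_smul, Pi.smul_apply, smul_eq_mul, hu, ← div_le_iff₀' (by positivity)]
    exact div_pow_le_orbitSup hs hK n j
  have hu_le : u i ≤ max (x i) (T u i / s) := by
    rw [hu]
    refine ciSup_le fun n => ?_
    rcases n with _ | n
    · simp
    · refine le_max_of_le_right ?_
      calc T^[n + 1] x i / s ^ (n + 1) ≤ s ^ n * T u i / s ^ (n + 1) := by gcongr; exact hTu n
        _ = T u i / s := by field_simp; ring
  calc s * u i ≤ s * max (x i) (T u i / s) := by gcongr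
    _ = max (s * x i) (T u i) := by rw [mul_max_of_nonneg _ _ hs.le, mul_div_cancel₀ _ hs.ne']

end OrbitSup

theorem exists_norm_apply_sub_smul_le {s K η : ℝ} {x : ℓ∞} (hs : 0 < s) (hx : ∀ i, 0 ≤ x i)
    (hK : ∀ n i, T^[n] x i ≤ K * s ^ n) (hη0 : 0 ≤ η) (hη : ∀ i, s * x i ≤ T x i + η) :
    ∃ u : ℓ∞, (∀ i, 0 ≤ u i) ∧ ‖x‖ ≤ ‖u‖ ∧ ‖T u - s • u‖ ≤ η := by
  set u : ℓ∞ := ⟨orbitSup T s x, memℓp_orbitSup hs hK hx⟩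
  have hu : ⇑u = orbitSup T s x := rfl
  have hxu : ∀ i, x i ≤ u i := le_orbitSup hs hK
  refine ⟨u, fun i => (hx i).trans (hxu i), lp.norm_le_norm_of_nonneg_of_le hx hxu,
    lp.norm_le_of_forall_le hη0 fun i => ?_⟩
  have hTu := hA.apply_le_mul_orbitSup hs hK hu i
  have hsu : s * u i ≤ T u i + η :=
    (hA.mul_orbitSup_le_max hs hK hu i).trans <|
      max_le ((hη i).trans (by linarith [hA.apply_mono hxu i])) (by linarith)
  rw [lp.coeFn_sub, lp.coeFn_smul, Pi.sub_apply, Pi.smul_apply, smul_eq_mul, Real.norm_eq_abs,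
    abs_le]
  constructor <;> linarith

section PathSeed

variable {ρ s : ℝ} {l : ℕ → ℕ} {N : ℕ}

theorem mul_pathSeed_le (hρ : 0 ≤ ρ) (hρs : ρ ≤ s) (hl : ∀ k < N, a (l k) (l (k + 1)) ≠ 0)
    (i : ℕ) : s * pathSeed a ρ l N i ≤
      T (pathSeed a ρ l N) i + ((s - ρ) * ‖pathSeed a ρ l N‖ + s * pathWeight a ρ l N) := by
  have hTu₀ : 0 ≤ T (pathSeed a ρ l N) i := hA.apply_nonneg (pathSeed_nonneg hA.nonneg hρ) i
  set u₀ := pathSeed a ρ l N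
  have hs : 0 ≤ s := hρ.trans hρs
  have hw := pathWeight_nonneg (l := l) hA.nonneg hρ
  have hslack : 0 ≤ (s - ρ) * ‖u₀‖ := mul_nonneg (sub_nonneg.2 hρs) (norm_nonneg _)
  obtain ⟨k, hk, hki⟩ := exists_mem_eq_sup' (s := range (N + 1)) nonempty_range_add_one
    fun k => pathWeight a ρ l k * (lp.single ⊤ (l k) 1 : ℓ∞) i
  rw [← pathSeed_apply, lp.single_apply, Pi.single_apply] at hki
  split_ifs at hki with hik
  · subst hik
    rw [mul_one] at hki
    rcases (mem_range_succ_iff.1 hk).lt_or_eq with hkN | rfl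
    · have hstep : ρ * pathWeight a ρ l k ≤ T u₀ (l k) := by
        rw [← mul_pathWeight_succ (hl k hkN)]
        exact (mul_le_mul_of_nonneg_left (pathWeight_le_pathSeed hkN) (hA.nonneg _ _)).trans
          (hA.mul_le_apply u₀ _ _)
      have : (s - ρ) * pathWeight a ρ l k ≤ (s - ρ) * ‖u₀‖ :=
        mul_le_mul_of_nonneg_left (hki ▸ lp.apply_le_norm u₀ _) (sub_nonneg.2 hρs)
      rw [hki]
      nlinarith [hw N]
    · rw [hki]
      linarith
  · rw [hki, mul_zero, mul_zero]
    nlinarith [hw N]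

theorem exists_iterate_pathSeed_le (hρ : 0 ≤ ρ) (hs : 0 ≤ s)
    (hgrow : ∀ j, ∃ B, ∀ n, ‖T^[n] (lp.single ⊤ j 1 : ℓ∞)‖ ≤ B * s ^ n) :
    ∃ K, ∀ n i, T^[n] (pathSeed a ρ l N) i ≤ K * s ^ n := by
  choose B hB using hgrow
  refine ⟨(range (N + 1)).sup' nonempty_range_add_one fun k => pathWeight a ρ l k * B (l k),
    fun n i => (hA.iterate_lpSup'_le _ _ n i).trans (sup'_le _ _ fun k hk => ?_)⟩
  have hw := pathWeight_nonneg (l := l) hA.nonneg hρ k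
  rw [hA.iterate_smul hw, lp.coeFn_smul, Pi.smul_apply, smul_eq_mul]
  calc pathWeight a ρ l k * T^[n] (lp.single ⊤ (l k) 1) i
      ≤ pathWeight a ρ l k * (B (l k) * s ^ n) := by
        gcongr
        exact (lp.apply_le_norm _ i).trans (hB _ n)
    _ = pathWeight a ρ l k * B (l k) * s ^ n := by ring
    _ ≤ _ := by
        gcongr
        exact le_sup' (fun k => pathWeight a ρ l k * B (l k)) hk

theorem exists_norm_apply_sub_smul_le_of_path (hρ : 0 ≤ ρ) (hρs : ρ ≤ s) (hs : 0 < s)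
    (hgrow : ∀ j, ∃ B, ∀ n, ‖T^[n] (lp.single ⊤ j 1 : ℓ∞)‖ ≤ B * s ^ n)
    (hl : ∀ k < N, a (l k) (l (k + 1)) ≠ 0) :
    ∃ u : ℓ∞, (∀ i, 0 ≤ u i) ∧ u ≠ 0 ∧
      ‖T u - s • u‖ ≤ (s - ρ + s * pathWeight a ρ l N) * ‖u‖ := by
  obtain ⟨K, hK⟩ := hA.exists_iterate_pathSeed_le (l := l) (N := N) hρ hs.le hgrow
  have hw := pathWeight_nonneg (l := l) hA.nonneg hρ N
  obtain ⟨u, huC, hu₀u, hu⟩ := hA.exists_norm_apply_sub_smul_le hs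
    (pathSeed_nonneg hA.nonneg hρ) hK (by have := sub_nonneg.2 hρs; positivity)
    (hA.mul_pathSeed_le hρ hρs hl)
  have hu1 : 1 ≤ ‖u‖ := one_le_norm_pathSeed.trans hu₀u
  refine ⟨u, huC, norm_pos_iff.1 (one_pos.trans_le hu1), hu.trans ?_⟩
  rw [add_mul]
  exact add_le_add (mul_le_mul_of_nonneg_left hu₀u (sub_nonneg.2 hρs))
    (le_mul_of_one_le_right (by positivity) hu1)

end PathSeed

theorem exists_path_lt_pathProd_mul (x : ℓ∞) (k : ℕ) :
    ∀ i {b : ℝ}, 0 ≤ b → b < T^[k] x i → ∃ l : ℕ → ℕ, l 0 = i ∧ b < pathProd a l k * x (l k) := by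
  induction k with
  | zero => exact fun i b _ hb => ⟨fun _ => i, rfl, by simpa [pathProd] using hb⟩
  | succ k ih =>
    intro i b hb0 hb
    rw [Function.iterate_succ_apply', hA.apply_eq] at hb
    obtain ⟨j, hj⟩ := exists_lt_of_lt_ciSup hb
    have haij : 0 < a i j := (hA.nonneg i j).lt_of_ne fun h => by
      rw [← h, zero_mul] at hj
      linarith
    obtain ⟨l, hl0, hl⟩ := ih j (div_nonneg hb0 haij.le) ((div_lt_iff₀' haij).2 hj)
    refine ⟨fun m => Nat.casesOn m i l, rfl, ?_⟩
    have hprod : pathProd a (fun m => Nat.casesOn m i l) (k + 1) = pathProd a l k * a i j := by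
      rw [pathProd, prod_range_succ', ← hl0]
      rfl
    calc b = a i j * (b / a i j) := by field_simp
      _ < a i j * (pathProd a l k * x (l k)) := by gcongr
      _ = _ := by rw [hprod]; ring

theorem exists_lt_pathProd {x : ℓ∞} (hx : ∀ i, 0 ≤ x i) {c : ℝ} (hc : 0 ≤ c) {N : ℕ}
    (h : c * ‖x‖ < ‖T^[N] x‖) : ∃ l : ℕ → ℕ, c < pathProd a l N := by
  rw [lp.norm_eq_ciSup] at h
  obtain ⟨i, hi⟩ := exists_lt_of_lt_ciSup h
  rw [Real.norm_eq_abs, abs_of_nonneg (hA.iterate_nonneg hx N i)] at hi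
  obtain ⟨l, -, hl⟩ := hA.exists_path_lt_pathProd_mul x N i (mul_nonneg hc (norm_nonneg x)) hi
  have hP : 0 ≤ pathProd a l N := prod_nonneg fun _ _ => hA.nonneg _ _
  exact ⟨l, lt_of_mul_lt_mul_right
    (hl.trans_le (mul_le_mul_of_nonneg_left (lp.apply_le_norm x _) hP)) (norm_nonneg x)⟩

theorem exists_path_pathWeight_le {t ρ c : ℝ} (ht : 0 < t)
    (htr : t ≤ coneRadius {x : ℓ∞ | ∀ i, 0 ≤ x i} T) (hρ : 0 ≤ ρ) (hρt : ρ < t) (hc : 0 < c) :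
    ∃ N l, (∀ k < N, a (l k) (l (k + 1)) ≠ 0) ∧ pathWeight a ρ l N ≤ c := by
  obtain ⟨n, hn⟩ := exists_pow_lt_of_lt_one (half_pos hc) ((div_lt_one ht).2 hρt)
  have hC : ∃ x ∈ {x : ℓ∞ | ∀ i, 0 ≤ x i}, x ≠ 0 := ⟨lp.single ⊤ 0 1, lp.single_one_nonneg 0,
    fun h => by simpa [h] using lp.norm_single_one 0⟩
  obtain ⟨x, hxC, -, hx⟩ := exists_lt_norm_iterate_of_le_coneRadius hC ht.le htr n
    (half_lt_self (pow_pos ht (n + 1)))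
  obtain ⟨l, hl⟩ := hA.exists_lt_pathProd hxC (by positivity) hx
  have hP : 0 < pathProd a l (n + 1) := lt_of_le_of_lt (by positivity) hl
  refine ⟨n + 1, l, fun k hk h => hP.ne' (prod_eq_zero (mem_range.2 hk) h), ?_⟩
  calc pathWeight a ρ l (n + 1) ≤ ρ ^ (n + 1) / (t ^ (n + 1) / 2) :=
        div_le_div_of_nonneg_left (by positivity) (by positivity) hl.le
    _ = 2 * (ρ / t) ^ (n + 1) := by rw [div_pow]; field_simp
    _ ≤ 2 * (ρ / t) ^ n := mul_le_mul_of_nonneg_left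
        (pow_le_pow_of_le_one (by positivity) ((div_lt_one ht).2 hρt).le n.le_succ) zero_le_two
    _ ≤ c := by linarith

theorem exists_norm_apply_sub_smul_le_mul {t δ : ℝ} (ht0 : 0 ≤ t)
    (htr : t ≤ coneRadius {x : ℓ∞ | ∀ i, 0 ≤ x i} T) (hδ : 0 < δ)
    (hgrow : ∀ j, ∃ B, ∀ n, ‖T^[n] (lp.single ⊤ j 1 : ℓ∞)‖ ≤ B * (t + δ) ^ n) :
    ∃ u : ℓ∞, (∀ i, 0 ≤ u i) ∧ u ≠ 0 ∧ ‖T u - t • u‖ ≤ 4 * δ * ‖u‖ := by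
  set s := t + δ
  set ρ := max 0 (t - δ)
  obtain ⟨N, l, hl, hw⟩ : ∃ N l, (∀ k < N, a (l k) (l (k + 1)) ≠ 0) ∧
      pathWeight a ρ l N ≤ δ / s := by
    rcases ht0.eq_or_lt with h | ht
    · exact ⟨0, id, by simp, by simp [pathWeight_zero, s, ← h, hδ.ne']⟩
    · exact hA.exists_path_pathWeight_le ht htr (le_max_left _ _) (max_lt ht (by linarith))
        (by positivity)
  obtain ⟨u, huC, hu0, hu⟩ := hA.exists_norm_apply_sub_smul_le_of_path (ρ := ρ) (s := s)
    (le_max_left _ _) (max_le (by positivity) (by linarith)) (by positivity) hgrow hl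
  refine ⟨u, huC, hu0, ?_⟩
  have hsρ : s - ρ ≤ 2 * δ := by linarith [le_max_right 0 (t - δ)]
  have hsw : s * pathWeight a ρ l N ≤ δ := by
    rwa [le_div_iff₀ (by positivity), mul_comm] at hw
  calc ‖T u - t • u‖ = ‖(T u - s • u) + δ • u‖ := by
        congr 1; simp only [s, add_smul]; abel
    _ ≤ (s - ρ + s * pathWeight a ρ l N) * ‖u‖ + δ * ‖u‖ := by
        refine (norm_add_le _ _).trans (add_le_add hu ?_)
        rw [norm_smul, Real.norm_of_nonneg hδ.le]
    _ ≤ 4 * δ * ‖u‖ := by nlinarith [norm_nonneg u]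

end IsMaxKernelOp

/-- **Corollary 3.19.** Let `A = [a(i,j)]` be an infinite bounded non-negative matrix
and let `T_A` be the max-kernel operator `(T_A x)(i) = sup_j a(i,j) x(j)` on the
positive cone `C = l∞₊` of `l∞`, with `e_j` the standard unit vectors. If
`sup {r_{e_j}(T_A) : j ∈ ℕ} ≤ t ≤ r(T_A)`, then `t ∈ σ_ap(T_A)`. -/
theorem mem_apSpectrum_of_infinite_matrix
    (a : ℕ → ℕ → ℝ) (ha0 : ∀ i j, 0 ≤ a i j) (habdd : ∃ M : ℝ, ∀ i j, a i j ≤ M)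
    (T : lp (fun _ : ℕ => ℝ) ⊤ → lp (fun _ : ℕ => ℝ) ⊤)
    (hT : ∀ (x : lp (fun _ : ℕ => ℝ) ⊤) (i : ℕ), (T x) i = ⨆ j : ℕ, a i j * x j)
    (e : ℕ → lp (fun _ : ℕ => ℝ) ⊤)
    (he : ∀ j i : ℕ, (e j) i = if i = j then (1 : ℝ) else 0)
    (t : ℝ)
    (ht1 : ∀ j : ℕ, localRadius {x : lp (fun _ : ℕ => ℝ) ⊤ | ∀ i, 0 ≤ x i} T (e j) ≤ t)
    (ht2 : t ≤ coneRadius {x : lp (fun _ : ℕ => ℝ) ⊤ | ∀ i, 0 ≤ x i} T) :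
    t ∈ apSpectrum {x : lp (fun _ : ℕ => ℝ) ⊤ | ∀ i, 0 ≤ x i} T := by
  have hA : IsMaxKernelOp a T := ⟨ha0, habdd, hT⟩
  obtain rfl : e = fun j => lp.single ⊤ j 1 := funext fun j => lp.ext <| funext fun i => by
    rw [he, lp.single_apply, Pi.single_apply]
  have hbdd j := hA.isBoundedUnder_rpow_norm_iterate (lp.norm_single_one j).le
  have ht0 : 0 ≤ t :=
    (le_limsup_of_frequently_le (.of_forall fun n => by positivity) (hbdd 0)).trans (ht1 0)
  refine mem_apSpectrum_of_forall_exists_norm_sub_smul_le isCone_nonneg hA.posHomOn ht0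
    fun ε hε => ?_
  obtain ⟨u, huC, hu0, hu⟩ := hA.exists_norm_apply_sub_smul_le_mul ht0 ht2 (δ := ε / 4)
    (by positivity) fun j => exists_le_mul_pow_of_limsup_rpow_lt (fun n => norm_nonneg _)
      (hbdd j) ((ht1 j).trans_lt (by linarith))
  exact ⟨u, huC, hu0, hu.trans_eq (by ring)⟩
end
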